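/- arXiv:2504.09003 — 2 statements merged into one kernel-verified Lean document; each statement's English description precedes it below -/
import Mathlib

section
/- For each n ≥ 2, the maximal commuting families of L = {0,1,...,n-1} are in bijection with single-elimination tournament brackets of n teams labeled by L (rooted binary trees with leaf set L, up to exchanging the two children of each internal node), and their number is (2n-3)!!. -/
set_option linter.unusedSectionVars false


open Finset

/-- A commuting family of subsets of `L`. -/
def IsCommFamOn {α : Type*} [DecidableEq α] (L : Finset α) (F : Finset (Finset α)) : Prop :=
  (∀ I ∈ F, I ⊆ L) ∧ (∀ I ∈ F, 1 < I.card) ∧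
    ∀ I ∈ F, ∀ J ∈ F, I ≠ J → Disjoint I J ∨ I ⊂ J ∨ J ⊂ I

/-- A maximal commuting family of `L`. -/
def IsMaxCommFamOn {α : Type*} [DecidableEq α] (L : Finset α) (F : Finset (Finset α)) : Prop :=
  IsCommFamOn L F ∧ ∀ G, IsCommFamOn L G → F ⊆ G → G = F

/-- Rooted binary plane trees with leaves labeled by `α`. -/
inductive BTree (α : Type) where
  | leaf : α → BTree α
  | node : BTree α → BTree α → BTree α

namespace BTree

variable {α : Type}

/-- The list of leaf labels, from left to right. -/
def leafList : BTree α → List α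
  | leaf a => [a]
  | node l r => l.leafList ++ r.leafList

/-- The set of leaf labels. -/
def leaves [DecidableEq α] : BTree α → Finset α
  | leaf a => {a}
  | node l r => l.leaves ∪ r.leaves

/-- The games of the tournament: each internal node, labeled by the set of
leaf labels below it. -/
def games [DecidableEq α] : BTree α → Finset (Finset α)
  | leaf _ => ∅
  | node l r => insert (l.leaves ∪ r.leaves) (l.games ∪ r.games)

/-- Equality of trees up to exchanging the two children of internal nodes. -/
inductive TreeEq : BTree α → BTree α → Prop
  | leaf (a : α) : TreeEq (.leaf a) (.leaf a)
  | node {l r l' r' : BTree α} : TreeEq l l' → TreeEq r r' →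
      TreeEq (.node l r) (.node l' r')
  | swap {l r l' r' : BTree α} : TreeEq l r' → TreeEq r l' →
      TreeEq (.node l r) (.node l' r')

/-- `t` is a labeling of the teams of `L = α`: each element of `α` occurs
exactly once as a leaf. -/
def IsLabeling (t : BTree α) : Prop := t.leafList.Nodup ∧ ∀ a : α, a ∈ t.leafList

end BTree

/-- Tournament brackets of teams labeled by `Fin n`: rooted binary trees with leaf
set `Fin n`, up to exchanging the two children of each internal node. -/
def TBracket (n : ℕ) : Type :=
  {q : Quot (@BTree.TreeEq (Fin n)) //
    ∃ t : BTree (Fin n), Quot.mk _ t = q ∧ t.IsLabeling}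


namespace BTree

variable {α : Type} [DecidableEq α]

lemma leaves_eq_toFinset (t : BTree α) : t.leaves = t.leafList.toFinset := by
  induction t with
  | leaf a => simp [leaves, leafList]
  | node l r ihl ihr => simp [leaves, leafList, ihl, ihr]

lemma leafList_ne_nil (t : BTree α) : t.leafList ≠ [] := by
  induction t with
  | leaf a => simp [leafList]
  | node l r ihl ihr => simp [leafList, ihl]

lemma leaves_nonempty (t : BTree α) : t.leaves.Nonempty := by
  rw [leaves_eq_toFinset]
  simpa [List.toFinset_eq_empty_iff] using leafList_ne_nil t

lemma nodup_node {l r : BTree α} (h : (node l r).leafList.Nodup) :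
    l.leafList.Nodup ∧ r.leafList.Nodup ∧ Disjoint l.leaves r.leaves := by
  rw [leafList, List.nodup_append] at h
  refine ⟨h.1, h.2.1, ?_⟩
  rw [leaves_eq_toFinset, leaves_eq_toFinset, List.disjoint_toFinset_iff_disjoint]
  intro x hx1 hx2
  exact h.2.2 x hx1 x hx2 rfl

lemma games_subset_leaves (t : BTree α) : ∀ I ∈ t.games, I ⊆ t.leaves := by
  induction t with
  | leaf a => simp [games]
  | node l r ihl ihr =>
    intro I hI
    rw [games, mem_insert, mem_union] at hI
    rcases hI with h | h | h
    · exact h.le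
    · exact (ihl I h).trans subset_union_left
    · exact (ihr I h).trans subset_union_right

lemma leaves_mem_games {l r : BTree α} : (node l r).leaves ∈ (node l r).games := by
  simp [games, leaves]

lemma games_isCommFamOn (t : BTree α) (hn : t.leafList.Nodup) :
    IsCommFamOn t.leaves t.games := by
  induction t with
  | leaf a => exact ⟨by simp [games], by simp [games], by simp [games]⟩
  | node l r ihl ihr =>
    obtain ⟨hl, hr, hd⟩ := nodup_node hn
    obtain ⟨_, cl, pl⟩ := ihl hl
    obtain ⟨_, cr, pr⟩ := ihr hr
    have hAne := leaves_nonempty l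
    have hBne := leaves_nonempty r
    refine ⟨games_subset_leaves _, ?_, ?_⟩
    · intro I hI
      rw [games, mem_insert, mem_union] at hI
      rcases hI with h | h | h
      · subst h
        have : 1 ≤ l.leaves.card := card_pos.2 hAne
        have : 1 ≤ r.leaves.card := card_pos.2 hBne
        rw [card_union_of_disjoint hd]; omega
      · exact cl I h
      · exact cr I h
    · -- pairwise
      have hsubL : ∀ I ∈ l.games, I ⊂ l.leaves ∪ r.leaves := by
        intro I hI
        refine ⟨(games_subset_leaves l I hI).trans subset_union_left, fun hs => ?_⟩
        obtain ⟨b, hb⟩ := hBne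
        have hbI : b ∈ I := hs (mem_union_right _ hb)
        exact (disjoint_right.1 hd) hb (games_subset_leaves l I hI hbI)
      have hsubR : ∀ I ∈ r.games, I ⊂ l.leaves ∪ r.leaves := by
        intro I hI
        refine ⟨(games_subset_leaves r I hI).trans subset_union_right, fun hs => ?_⟩
        obtain ⟨b, hb⟩ := hAne
        have hbI : b ∈ I := hs (mem_union_left _ hb)
        exact (disjoint_left.1 hd) hb (games_subset_leaves r I hI hbI)
      intro I hI J hJ hne
      rw [games, mem_insert, mem_union] at hI hJ
      rcases hI with hI | hI | hI <;> rcases hJ with hJ | hJ | hJ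
      · exact absurd (hI.trans hJ.symm) hne
      · subst hI; exact Or.inr (Or.inr (hsubL J hJ))
      · subst hI; exact Or.inr (Or.inr (hsubR J hJ))
      · subst hJ; exact Or.inr (Or.inl (hsubL I hI))
      · exact pl I hI J hJ hne
      · exact Or.inl (disjoint_of_subset_left (games_subset_leaves l I hI)
          (disjoint_of_subset_right (games_subset_leaves r J hJ) hd))
      · subst hJ; exact Or.inr (Or.inl (hsubR I hI))
      · exact Or.inl (disjoint_of_subset_left (games_subset_leaves r I hI)
          (disjoint_of_subset_right (games_subset_leaves l J hJ) hd.symm))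
      · exact pr I hI J hJ hne


lemma mem_games_of_comm (t : BTree α) (hn : t.leafList.Nodup) (S : Finset α)
    (hS : S ⊆ t.leaves) (hc : 2 ≤ S.card)
    (h : ∀ I ∈ t.games, S = I ∨ Disjoint S I ∨ S ⊂ I ∨ I ⊂ S) : S ∈ t.games := by
  induction t with
  | leaf a =>
    exfalso
    have := card_le_card hS
    simp [leaves] at this
    omega
  | node l r ihl ihr =>
    obtain ⟨hl, hr, hd⟩ := nodup_node hn
    have hSne : S.Nonempty := card_pos.1 (by omega)
    set A := l.leaves with hA
    set B := r.leaves with hB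
    have htop : A ∪ B ∈ (node l r).games := leaves_mem_games
    rcases h _ htop with htopeq | hdisj | hssub | hsup
    · rw [htopeq]; exact htop
    · exact absurd (disjoint_self.1 (hdisj.mono_right hS)) hSne.ne_empty
    · -- S ⊂ A ∪ B
      have key : S ⊆ A ∨ S ⊆ B := by
        by_contra hcon
        push_neg at hcon
        have hSA : (S ∩ A).Nonempty := by
          rw [← not_disjoint_iff_nonempty_inter]
          intro hdj
          exact hcon.2 fun x hx => by
            rcases mem_union.1 (hS hx) with h1 | h1
            · exact absurd h1 (disjoint_left.1 hdj hx)
            · exact h1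
        have hSB : (S ∩ B).Nonempty := by
          rw [← not_disjoint_iff_nonempty_inter]
          intro hdj
          exact hcon.1 fun x hx => by
            rcases mem_union.1 (hS hx) with h1 | h1
            · exact h1
            · exact absurd h1 (disjoint_left.1 hdj hx)
        have hAS : A ⊆ S := by
          cases l with
          | leaf a =>
            obtain ⟨x, hx⟩ := hSA
            rw [mem_inter] at hx
            have : x = a := by simpa [hA, leaves] using hx.2
            subst this
            intro y hy
            have : y = x := by simpa [hA, leaves] using hy
            subst this; exact hx.1
          | node l1 l2 =>
            have hAg : A ∈ (BTree.node (l1.node l2) r).games := by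
              rw [games]
              exact mem_insert_of_mem (mem_union_left _ leaves_mem_games)
            rcases h _ hAg with h1 | h1 | h1 | h1
            · obtain ⟨x, hx⟩ := hSB
              rw [mem_inter, h1] at hx
              exact absurd hx.2 (disjoint_left.1 hd hx.1)
            · obtain ⟨x, hx⟩ := hSA
              rw [mem_inter] at hx
              exact absurd hx.2 (disjoint_left.1 h1 hx.1)
            · obtain ⟨x, hx⟩ := hSB
              rw [mem_inter] at hx
              exact absurd (h1.1 hx.1) (disjoint_right.1 hd hx.2)
            · exact h1.1
        have hBS : B ⊆ S := by
          cases r with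
          | leaf a =>
            obtain ⟨x, hx⟩ := hSB
            rw [mem_inter] at hx
            have : x = a := by simpa [hB, leaves] using hx.2
            subst this
            intro y hy
            have : y = x := by simpa [hB, leaves] using hy
            subst this; exact hx.1
          | node r1 r2 =>
            have hBg : B ∈ (BTree.node l (r1.node r2)).games := by
              rw [games]
              exact mem_insert_of_mem (mem_union_right _ leaves_mem_games)
            rcases h _ hBg with h1 | h1 | h1 | h1
            · obtain ⟨x, hx⟩ := hSA
              rw [mem_inter, h1] at hx
              exact absurd hx.2 (disjoint_right.1 hd hx.1)
            · obtain ⟨x, hx⟩ := hSB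
              rw [mem_inter] at hx
              exact absurd hx.2 (disjoint_left.1 h1 hx.1)
            · obtain ⟨x, hx⟩ := hSA
              rw [mem_inter] at hx
              exact absurd (h1.1 hx.1) (disjoint_left.1 hd hx.2)
            · exact h1.1
        exact hssub.2 (union_subset hAS hBS)
      rcases key with hk | hk
      · have : S ∈ l.games := by
          refine ihl hl hk ?_
          intro I hI
          exact h I (by rw [games]; exact mem_insert_of_mem (mem_union_left _ hI))
        rw [games]; exact mem_insert_of_mem (mem_union_left _ this)
      · have : S ∈ r.games := by
          refine ihr hr hk ?_
          intro I hI
          exact h I (by rw [games]; exact mem_insert_of_mem (mem_union_right _ hI))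
        rw [games]; exact mem_insert_of_mem (mem_union_right _ this)
    · -- A ∪ B ⊂ S : impossible
      exact absurd (hS.trans (le_refl _)) (fun hh => hsup.2 hh)

lemma games_isMaxCommFamOn (t : BTree α) (hn : t.leafList.Nodup) :
    IsMaxCommFamOn t.leaves t.games := by
  refine ⟨games_isCommFamOn t hn, ?_⟩
  intro G hG hsub
  refine Finset.Subset.antisymm ?_ hsub
  intro S hSG
  refine mem_games_of_comm t hn S (hG.1 S hSG) (hG.2.1 S hSG) ?_
  intro I hI
  rcases eq_or_ne S I with h | h
  · exact Or.inl h
  · exact Or.inr (hG.2.2 S hSG I (hsub hI) h)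


lemma top_not_mem_sub {l r : BTree α} (hn : (node l r).leafList.Nodup) :
    l.leaves ∪ r.leaves ∉ l.games ∪ r.games := by
  obtain ⟨hl, hr, hd⟩ := nodup_node hn
  intro hmem
  rcases mem_union.1 hmem with h | h
  · obtain ⟨b, hb⟩ := leaves_nonempty r
    have : b ∈ l.leaves := games_subset_leaves l _ h (mem_union_right _ hb)
    exact disjoint_left.1 hd this hb
  · obtain ⟨b, hb⟩ := leaves_nonempty l
    have : b ∈ r.leaves := games_subset_leaves r _ h (by simp [leaves, hb])
    exact disjoint_right.1 hd this hb

lemma games_disjoint {l r : BTree α} (hn : (node l r).leafList.Nodup) :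
    Disjoint l.games r.games := by
  obtain ⟨hl, hr, hd⟩ := nodup_node hn
  rw [disjoint_left]
  intro I hIl hIr
  have h2 := (games_isCommFamOn l hl).2.1 I hIl
  have : I ⊆ l.leaves ∩ r.leaves :=
    subset_inter (games_subset_leaves l I hIl) (games_subset_leaves r I hIr)
  rw [(disjoint_iff_inter_eq_empty).1 hd, subset_empty] at this
  simp [this] at h2

lemma card_games (t : BTree α) (hn : t.leafList.Nodup) :
    t.games.card + 1 = t.leaves.card := by
  induction t with
  | leaf a => simp [games, leaves]
  | node l r ihl ihr =>
    obtain ⟨hl, hr, hd⟩ := nodup_node hn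
    have h1 := ihl hl
    have h2 := ihr hr
    rw [games, card_insert_of_notMem (top_not_mem_sub hn),
      card_union_of_disjoint (games_disjoint hn)]
    show l.games.card + r.games.card + 1 + 1 = (l.leaves ∪ r.leaves).card
    rw [card_union_of_disjoint hd]
    omega

lemma TreeEq.leaves_eq {t t' : BTree α} (h : BTree.TreeEq t t') : t.leaves = t'.leaves := by
  induction h with
  | leaf a => rfl
  | node h1 h2 ih1 ih2 => simp [leaves, ih1, ih2]
  | swap h1 h2 ih1 ih2 => simp [leaves, ih1, ih2, union_comm]

lemma TreeEq.games_eq {t t' : BTree α} (h : BTree.TreeEq t t') : t.games = t'.games := by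
  induction h with
  | leaf a => rfl
  | node h1 h2 ih1 ih2 => simp [games, ih1, ih2, h1.leaves_eq, h2.leaves_eq]
  | swap h1 h2 ih1 ih2 =>
    simp [games, ih1, ih2, h1.leaves_eq, h2.leaves_eq, union_comm]

lemma two_le_card_leaves {l r : BTree α} (hn : (node l r).leafList.Nodup) :
    2 ≤ (node l r).leaves.card := by
  obtain ⟨hl, hr, hd⟩ := nodup_node hn
  have h1 : 1 ≤ l.leaves.card := card_pos.2 (leaves_nonempty l)
  have h2 : 1 ≤ r.leaves.card := card_pos.2 (leaves_nonempty r)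
  show 2 ≤ (l.leaves ∪ r.leaves).card
  rw [card_union_of_disjoint hd]; omega

lemma games_filter_left {l r : BTree α} (hn : (node l r).leafList.Nodup) :
    l.games = (node l r).games.filter (· ⊆ l.leaves) := by
  obtain ⟨hl, hr, hd⟩ := nodup_node hn
  ext I
  rw [mem_filter]
  constructor
  · intro hI
    exact ⟨by rw [games]; exact mem_insert_of_mem (mem_union_left _ hI),
      games_subset_leaves l I hI⟩
  · rintro ⟨hI, hsub⟩
    rw [games, mem_insert, mem_union] at hI
    rcases hI with h | h | h
    · exfalso
      obtain ⟨b, hb⟩ := leaves_nonempty r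
      have : b ∈ l.leaves := hsub (h ▸ mem_union_right _ hb)
      exact disjoint_left.1 hd this hb
    · exact h
    · exfalso
      have h2 := (games_isCommFamOn r hr).2.1 I h
      have : I ⊆ l.leaves ∩ r.leaves := subset_inter hsub (games_subset_leaves r I h)
      rw [(disjoint_iff_inter_eq_empty).1 hd, subset_empty] at this
      simp [this] at h2

lemma games_filter_right {l r : BTree α} (hn : (node l r).leafList.Nodup) :
    r.games = (node l r).games.filter (· ⊆ r.leaves) := by
  obtain ⟨hl, hr, hd⟩ := nodup_node hn
  ext I
  rw [mem_filter]
  constructor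
  · intro hI
    exact ⟨by rw [games]; exact mem_insert_of_mem (mem_union_right _ hI),
      games_subset_leaves r I hI⟩
  · rintro ⟨hI, hsub⟩
    rw [games, mem_insert, mem_union] at hI
    rcases hI with h | h | h
    · exfalso
      obtain ⟨b, hb⟩ := leaves_nonempty l
      have : b ∈ r.leaves := hsub (h ▸ mem_union_left _ hb)
      exact disjoint_left.1 hd hb this
    · exfalso
      have h2 := (games_isCommFamOn l hl).2.1 I h
      have : I ⊆ l.leaves ∩ r.leaves := subset_inter (games_subset_leaves l I h) hsub
      rw [(disjoint_iff_inter_eq_empty).1 hd, subset_empty] at this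
      simp [this] at h2
    · exact h

lemma treeEq_of_games_eq (t : BTree α) : ∀ t' : BTree α,
    t.leafList.Nodup → t'.leafList.Nodup → t.leaves = t'.leaves →
    t.games = t'.games → BTree.TreeEq t t' := by
  induction t with
  | leaf a =>
    intro t' hn hn' hleq hgeq
    cases t' with
    | leaf b =>
      have : b = a := by
        have : b ∈ ({a} : Finset α) := by
          rw [show ({a} : Finset α) = leaves (leaf b) from hleq]; simp [leaves]
        simpa using this
      subst this; exact TreeEq.leaf _
    | node l' r' =>
      exfalso
      have := two_le_card_leaves hn'
      rw [← hleq] at this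
      simp [leaves] at this
  | node l r ihl ihr =>
    intro t' hn hn' hleq hgeq
    cases t' with
    | leaf b =>
      exfalso
      have := two_le_card_leaves hn
      rw [hleq] at this
      simp [leaves] at this
    | node l' r' =>
      obtain ⟨hl, hr, hd⟩ := nodup_node hn
      obtain ⟨hl', hr', hd'⟩ := nodup_node hn'
      have hL : l.leaves ∪ r.leaves = l'.leaves ∪ r'.leaves := hleq
      have h1 : l'.leaves ⊆ l.leaves ∨ l'.leaves ⊆ r.leaves := by
        cases l' with
        | leaf b =>
          have hb : b ∈ l.leaves ∪ r.leaves := by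
            rw [hL]; exact mem_union_left _ (by simp [leaves])
          rcases mem_union.1 hb with h | h
          · exact Or.inl (by simp [leaves, h])
          · exact Or.inr (by simp [leaves, h])
        | node x y =>
          have hmem : (BTree.node x y).leaves ∈ (BTree.node l r).games := by
            rw [hgeq, games]
            exact mem_insert_of_mem (mem_union_left _ leaves_mem_games)
          rw [games, mem_insert, mem_union] at hmem
          rcases hmem with h | h | h
          · exfalso
            obtain ⟨b, hb⟩ := leaves_nonempty r'
            have : b ∈ (BTree.node x y).leaves := by
              rw [h, hL]; exact mem_union_right _ hb
            exact disjoint_right.1 hd' hb this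
          · exact Or.inl (games_subset_leaves l _ h)
          · exact Or.inr (games_subset_leaves r _ h)
      have h2 : r'.leaves ⊆ l.leaves ∨ r'.leaves ⊆ r.leaves := by
        cases r' with
        | leaf b =>
          have hb : b ∈ l.leaves ∪ r.leaves := by
            rw [hL]; exact mem_union_right _ (by simp [leaves])
          rcases mem_union.1 hb with h | h
          · exact Or.inl (by simp [leaves, h])
          · exact Or.inr (by simp [leaves, h])
        | node x y =>
          have hmem : (BTree.node x y).leaves ∈ (BTree.node l r).games := by
            rw [hgeq, games]
            exact mem_insert_of_mem (mem_union_right _ leaves_mem_games)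
          rw [games, mem_insert, mem_union] at hmem
          rcases hmem with h | h | h
          · exfalso
            obtain ⟨b, hb⟩ := leaves_nonempty l'
            have : b ∈ (BTree.node x y).leaves := by
              rw [h, hL]; exact mem_union_left _ hb
            exact disjoint_left.1 hd' hb this
          · exact Or.inl (games_subset_leaves l _ h)
          · exact Or.inr (games_subset_leaves r _ h)
      have hcomb : ∀ X Y : Finset α, l'.leaves ⊆ X → r'.leaves ⊆ Y → Disjoint X Y →
          X ∪ Y = l'.leaves ∪ r'.leaves → l'.leaves = X ∧ r'.leaves = Y := by
        intro X Y hX hY hdXY hun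
        constructor
        · refine Subset.antisymm hX fun x hx => ?_
          have hx2 : x ∈ l'.leaves ∪ r'.leaves := hun ▸ mem_union_left _ hx
          rcases mem_union.1 hx2 with h | h
          · exact h
          · exact absurd (hY h) (disjoint_left.1 hdXY hx)
        · refine Subset.antisymm hY fun x hx => ?_
          have hx2 : x ∈ l'.leaves ∪ r'.leaves := hun ▸ mem_union_right _ hx
          rcases mem_union.1 hx2 with h | h
          · exact absurd (hX h) (disjoint_right.1 hdXY hx)
          · exact h
      rcases h1 with h1 | h1 <;> rcases h2 with h2 | h2
      · exfalso
        obtain ⟨b, hb⟩ := leaves_nonempty r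
        have hb2 : b ∈ l'.leaves ∪ r'.leaves := by rw [← hL]; exact mem_union_right _ hb
        have : b ∈ l.leaves := by
          rcases mem_union.1 hb2 with h | h
          · exact h1 h
          · exact h2 h
        exact disjoint_left.1 hd this hb
      · -- straight case
        obtain ⟨hA, hB⟩ := hcomb _ _ h1 h2 hd hL
        have hgl : l.games = l'.games := by
          rw [games_filter_left hn, games_filter_left hn', hgeq, hA]
        have hgr : r.games = r'.games := by
          rw [games_filter_right hn, games_filter_right hn', hgeq, hB]
        exact TreeEq.node (ihl l' hl hl' hA.symm hgl) (ihr r' hr hr' hB.symm hgr)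
      · -- swapped case
        obtain ⟨hA, hB⟩ := hcomb _ _ h1 h2 hd.symm (by rw [union_comm]; exact hL)
        have hgl : r.games = l'.games := by
          rw [games_filter_right hn, games_filter_left hn', hgeq, hA]
        have hgr : l.games = r'.games := by
          rw [games_filter_left hn, games_filter_right hn', hgeq, hB]
        exact TreeEq.swap (ihl r' hl hr' hB.symm hgr) (ihr l' hr hl' hA.symm hgl)
      · exfalso
        obtain ⟨b, hb⟩ := leaves_nonempty l
        have hb2 : b ∈ l'.leaves ∪ r'.leaves := by rw [← hL]; exact mem_union_left _ hb
        have : b ∈ r.leaves := by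
          rcases mem_union.1 hb2 with h | h
          · exact h1 h
          · exact h2 h
        exact disjoint_left.1 hd hb this

end BTree

section Fam
variable {α : Type} [DecidableEq α] {L : Finset α} {F : Finset (Finset α)}

lemma mem_of_comm (hF : IsMaxCommFamOn L F) {T : Finset α} (hT : T ⊆ L) (hc : 1 < T.card)
    (h : ∀ I ∈ F, T = I ∨ Disjoint T I ∨ T ⊂ I ∨ I ⊂ T) : T ∈ F := by
  have hcomm : IsCommFamOn L (insert T F) := by
    obtain ⟨h1, h2, h3⟩ := hF.1
    refine ⟨?_, ?_, ?_⟩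
    · intro I hI
      rcases mem_insert.1 hI with rfl | hI
      · exact hT
      · exact h1 I hI
    · intro I hI
      rcases mem_insert.1 hI with rfl | hI
      · exact hc
      · exact h2 I hI
    · intro I hI J hJ hne
      rcases mem_insert.1 hI with hIT | hI'
      · rcases mem_insert.1 hJ with hJT | hJ'
        · exact absurd (hIT.trans hJT.symm) hne
        · subst hIT
          rcases h J hJ' with h' | h' | h' | h'
          · exact absurd h' hne
          · exact Or.inl h'
          · exact Or.inr (Or.inl h')
          · exact Or.inr (Or.inr h')
      · rcases mem_insert.1 hJ with hJT | hJ'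
        · subst hJT
          rcases h I hI' with h' | h' | h' | h'
          · exact absurd h'.symm hne
          · exact Or.inl h'.symm
          · exact Or.inr (Or.inr h')
          · exact Or.inr (Or.inl h')
        · exact h3 I hI' J hJ' hne
  have := hF.2 _ hcomm (subset_insert _ _)
  exact this ▸ mem_insert_self T F

lemma top_mem (hF : IsMaxCommFamOn L F) (hL : 1 < L.card) : L ∈ F := by
  refine mem_of_comm hF Subset.rfl hL fun I hI => ?_
  rcases eq_or_ne L I with h | h
  · exact Or.inl h
  · exact Or.inr (Or.inr (Or.inr ⟨hF.1.1 I hI,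
      fun hs => h (Subset.antisymm hs (hF.1.1 I hI))⟩))

lemma filter_isMaxCommFamOn (hF : IsMaxCommFamOn L F) {X : Finset α} (hXL : X ⊆ L)
    (hXne : X ≠ L)
    (hsplit : ∀ I ∈ F, I ≠ L → I ⊆ X ∨ Disjoint I X) :
    IsMaxCommFamOn X (F.filter (· ⊆ X)) := by
  obtain ⟨h1, h2, h3⟩ := hF.1
  have hXssub : X ⊂ L := ⟨hXL, fun h => hXne (Subset.antisymm hXL h)⟩
  constructor
  · refine ⟨?_, ?_, ?_⟩
    · intro I hI; exact (mem_filter.1 hI).2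
    · intro I hI; exact h2 I (mem_filter.1 hI).1
    · intro I hI J hJ hne; exact h3 I (mem_filter.1 hI).1 J (mem_filter.1 hJ).1 hne
  · intro G hG hsub
    have hgf : ∀ g ∈ G, ∀ J ∈ F, g ≠ J → Disjoint g J ∨ g ⊂ J ∨ J ⊂ g := by
      intro g hg J hJ hne
      by_cases hJX : J ⊆ X
      · exact hG.2.2 g hg J (hsub (mem_filter.2 ⟨hJ, hJX⟩)) hne
      · rcases eq_or_ne J L with rfl | hJL
        · exact Or.inr (Or.inl (lt_of_le_of_lt (hG.1 g hg) hXssub))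
        · rcases hsplit J hJ hJL with h | h
          · exact absurd h hJX
          · exact Or.inl (disjoint_of_subset_left (hG.1 g hg) h.symm)
    have hGF : IsCommFamOn L (G ∪ F) := by
      refine ⟨?_, ?_, ?_⟩
      · intro I hI
        rcases mem_union.1 hI with h | h
        · exact (hG.1 I h).trans hXL
        · exact h1 I h
      · intro I hI
        rcases mem_union.1 hI with h | h
        · exact hG.2.1 I h
        · exact h2 I h
      · intro I hI J hJ hne
        rcases mem_union.1 hI with hI' | hI' <;> rcases mem_union.1 hJ with hJ' | hJ'
        · exact hG.2.2 I hI' J hJ' hne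
        · exact hgf I hI' J hJ' hne
        · rcases hgf J hJ' I hI' hne.symm with h | h | h
          · exact Or.inl h.symm
          · exact Or.inr (Or.inr h)
          · exact Or.inr (Or.inl h)
        · exact h3 I hI' J hJ' hne
    have hGFF : G ∪ F = F := hF.2 _ hGF subset_union_right
    refine Subset.antisymm (fun g hg => mem_filter.2 ⟨?_, hG.1 g hg⟩) hsub
    rw [← hGFF]; exact mem_union_left _ hg

lemma exists_tree : ∀ L : Finset α, L.Nonempty → ∀ F, IsMaxCommFamOn L F →
    ∃ t : BTree α, t.leafList.Nodup ∧ t.leaves = L ∧ t.games = F := by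
  intro L
  induction L using Finset.strongInduction with
  | _ L ih =>
    intro hLne F hF
    rcases eq_or_lt_of_le (Finset.one_le_card.2 hLne) with hcard | hL2
    · -- singleton
      obtain ⟨a, rfl⟩ := card_eq_one.1 hcard.symm
      have hFe : F = ∅ := by
        rw [eq_empty_iff_forall_notMem]
        intro I hI
        have := card_le_card (hF.1.1 I hI)
        have := hF.1.2.1 I hI
        simp at *; omega
      exact ⟨BTree.leaf a, by simp [BTree.leafList], by simp [BTree.leaves], by simp [BTree.games, hFe]⟩
    · have hLF : L ∈ F := top_mem hF hL2
      by_cases hC : (F.filter (· ⊂ L)).Nonempty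
      · obtain ⟨A, hAC, hAmax⟩ : ∃ m ∈ F.filter (· ⊂ L), ∀ x ∈ F.filter (· ⊂ L), ¬m < x := by
          obtain ⟨m, hm, hmax⟩ := Finset.exists_maximal hC
          exact ⟨m, hm, fun x hx hlt => (not_le_of_gt hlt) (hmax hx hlt.le)⟩
        have hAF : A ∈ F := (mem_filter.1 hAC).1
        have hAL : A ⊂ L := (mem_filter.1 hAC).2
        have hAcard := hF.1.2.1 A hAF
        have hAne : A.Nonempty := card_pos.1 (by omega)
        set B := L \ A with hBdef
        have hBne : B.Nonempty := sdiff_nonempty.2 fun h => hAL.2 h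
        have hdAB : Disjoint A B := disjoint_sdiff
        have hsplit : ∀ I ∈ F, I ≠ L → I ⊆ A ∨ I ⊆ B := by
          intro I hI hne
          have hIL : I ⊂ L := ⟨hF.1.1 I hI, fun hs => hne (Subset.antisymm (hF.1.1 I hI) hs)⟩
          rcases eq_or_ne I A with rfl | hIA
          · exact Or.inl Subset.rfl
          rcases hF.1.2.2 I hI A hAF hIA with h | h | h
          · refine Or.inr fun x hx => mem_sdiff.2 ⟨hIL.1 hx, fun hxA => ?_⟩
            exact disjoint_left.1 h hx hxA
          · exact Or.inl h.1
          · have hIC : I ∈ F.filter (· ⊂ L) := mem_filter.2 ⟨hI, hIL⟩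
            exact absurd h (hAmax I hIC)
        have hmaxA : IsMaxCommFamOn A (F.filter (· ⊆ A)) := by
          refine filter_isMaxCommFamOn hF hAL.1 (fun h => hAL.2 h.ge) ?_
          intro I hI hne
          rcases hsplit I hI hne with h | h
          · exact Or.inl h
          · exact Or.inr (disjoint_left.2 fun x hx hxA =>
              (mem_sdiff.1 (h hx)).2 hxA)
        have hBL : B ⊆ L := sdiff_subset
        have hBneL : B ≠ L := by
          intro h
          obtain ⟨a, ha⟩ := hAne
          exact (mem_sdiff.1 (h ▸ hAL.1 ha)).2 ha
        have hmaxB : IsMaxCommFamOn B (F.filter (· ⊆ B)) := by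
          refine filter_isMaxCommFamOn hF hBL hBneL ?_
          intro I hI hne
          rcases hsplit I hI hne with h | h
          · exact Or.inr (disjoint_left.2 fun x hx hxB =>
              (mem_sdiff.1 hxB).2 (h hx))
          · exact Or.inl h
        obtain ⟨tA, ndA, lvA, gmA⟩ := ih A hAL hAne _ hmaxA
        obtain ⟨tB, ndB, lvB, gmB⟩ := ih B ⟨hBL, fun h => hBneL (Subset.antisymm hBL h)⟩ hBne _ hmaxB
        refine ⟨BTree.node tA tB, ?_, ?_, ?_⟩
        · rw [BTree.leafList, List.nodup_append]
          refine ⟨ndA, ndB, ?_⟩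
          rw [← List.disjoint_iff_ne]
          rw [← List.disjoint_toFinset_iff_disjoint]
          rw [← BTree.leaves_eq_toFinset, ← BTree.leaves_eq_toFinset, lvA, lvB]
          exact hdAB
        · show tA.leaves ∪ tB.leaves = L
          rw [lvA, lvB, hBdef, union_sdiff_of_subset hAL.1]
        · show insert (tA.leaves ∪ tB.leaves) (tA.games ∪ tB.games) = F
          rw [lvA, lvB, hBdef, union_sdiff_of_subset hAL.1, gmA, gmB]
          ext I
          rw [mem_insert, mem_union, mem_filter, mem_filter]
          constructor
          · rintro (rfl | ⟨h, _⟩ | ⟨h, _⟩) <;> assumption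
          · intro hI
            rcases eq_or_ne I L with rfl | hne
            · exact Or.inl rfl
            · rcases hsplit I hI hne with h | h
              · exact Or.inr (Or.inl ⟨hI, h⟩)
              · exact Or.inr (Or.inr ⟨hI, h⟩)
      · -- no proper member: L has exactly two elements
        have hFL : F = {L} := by
          refine Subset.antisymm (fun I hI => mem_singleton.2 ?_) (by simpa using hLF)
          by_contra hne
          exact hC ⟨I, mem_filter.2 ⟨hI, ⟨hF.1.1 I hI,
            fun hs => hne (Subset.antisymm (hF.1.1 I hI) hs)⟩⟩⟩
        obtain ⟨x, hx, y, hy, hxy⟩ := Finset.one_lt_card.1 hL2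
        have hTL : ({x, y} : Finset α) = L := by
          by_contra h
          have hT : ({x, y} : Finset α) ∈ F := by
            refine mem_of_comm hF (insert_subset hx (singleton_subset_iff.2 hy))
              (by rw [card_pair hxy]; omega) ?_
            intro I hI
            rw [hFL, mem_singleton] at hI
            subst hI
            exact Or.inr (Or.inr (Or.inl ⟨insert_subset hx (singleton_subset_iff.2 hy), fun hs => h
              (Subset.antisymm (insert_subset hx (singleton_subset_iff.2 hy)) hs)⟩))
          rw [hFL, mem_singleton] at hT
          exact h hT
        have hunion : ({x} : Finset α) ∪ {y} = ({x, y} : Finset α) := by ext w; simp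
        refine ⟨BTree.node (BTree.leaf x) (BTree.leaf y), ?_, ?_, ?_⟩
        · simp [BTree.leafList, hxy]
        · show ({x} : Finset α) ∪ {y} = L
          rw [hunion, hTL]
        · show insert (({x} : Finset α) ∪ {y}) (∅ ∪ ∅) = F
          rw [hunion, hTL, hFL]
          simp
  -- done

end Fam

section Ins
variable {α : Type} [DecidableEq α]

/-- Insert a new team `a` as the sibling of position `S`. -/
def insFam (a : α) (S : Finset α) (F' : Finset (Finset α)) : Finset (Finset α) :=
  insert (insert a S) (F'.image fun I => if S ⊂ I then insert a I else I)

variable {L' : Finset α} {a : α} {F' : Finset (Finset α)} {S : Finset α}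

lemma ins_ssub_ins {I : Finset α} (haS : a ∉ S) (haI : a ∉ I) (h : S ⊂ I) :
    insert a S ⊂ insert a I := by
  refine ⟨insert_subset_insert _ h.1, fun hc => h.2 ?_⟩
  intro x hx
  rcases mem_insert.1 (hc (mem_insert_of_mem hx)) with rfl | h'
  · exact absurd hx haI
  · exact h'

section Hyp
variable (ha : a ∉ L') (hF' : IsMaxCommFamOn L' F')
  (hS : S ∈ F' ∨ ∃ b ∈ L', S = {b})

include ha hF' hS

lemma hSL' : S ⊆ L' := by
  rcases hS with h | ⟨b, hb, rfl⟩
  · exact hF'.1.1 S h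
  · simpa using hb

lemma hSne : S.Nonempty := by
  rcases hS with h | ⟨b, hb, rfl⟩
  · have := hF'.1.2.1 S h; exact card_pos.1 (by omega)
  · simp

lemma haS : a ∉ S := fun h => ha (hSL' ha hF' hS h)

lemma hScomm : ∀ I ∈ F', S = I ∨ Disjoint S I ∨ S ⊂ I ∨ I ⊂ S := by
  intro I hI
  rcases hS with h | ⟨b, hb, rfl⟩
  · rcases eq_or_ne S I with h' | h'
    · exact Or.inl h'
    · exact Or.inr (hF'.1.2.2 S h I hI h')
  · by_cases hbI : b ∈ I
    · refine Or.inr (Or.inr (Or.inl ⟨singleton_subset_iff.2 hbI, fun hs => ?_⟩))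
      have h1 := card_le_card hs
      have h2 := hF'.1.2.1 I hI
      rw [card_singleton] at h1
      omega
    · exact Or.inr (Or.inl (by simp [hbI]))

lemma insFam_isCommFamOn : IsCommFamOn (insert a L') (insFam a S F') := by
  have hSub := hSL' ha hF' hS
  have hNe := hSne ha hF' hS
  have haS' := haS ha hF' hS
  have hcomm := hScomm ha hF' hS
  have haI : ∀ I ∈ F', a ∉ I := fun I hI h => ha (hF'.1.1 I hI h)
  have hmono : ∀ I ∈ F', ∀ J ∈ F', I ⊂ J →
      (if S ⊂ I then insert a I else I) ⊂ (if S ⊂ J then insert a J else J) := by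
    intro I hI J hJ hIJ
    by_cases h1 : S ⊂ I
    · rw [if_pos h1, if_pos (h1.trans hIJ)]
      exact ins_ssub_ins (haI I hI) (haI J hJ) hIJ
    · rw [if_neg h1]
      by_cases h2 : S ⊂ J
      · rw [if_pos h2]
        exact hIJ.trans_subset (subset_insert _ _)
      · rw [if_neg h2]; exact hIJ
  refine ⟨?_, ?_, ?_⟩
  · intro T hT
    rw [insFam, mem_insert, mem_image] at hT
    rcases hT with rfl | ⟨I, hI, rfl⟩
    · exact insert_subset_insert _ (hSub)
    · split
      · exact insert_subset_insert _ (hF'.1.1 I hI)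
      · exact (hF'.1.1 I hI).trans (subset_insert _ _)
  · intro T hT
    rw [insFam, mem_insert, mem_image] at hT
    rcases hT with rfl | ⟨I, hI, rfl⟩
    · rw [card_insert_of_notMem haS']
      have := card_pos.2 hNe; omega
    · have := hF'.1.2.1 I hI
      split
      · rw [card_insert_of_notMem (haI I hI)]; omega
      · omega
  · have haux1 : ∀ I ∈ F', insert a S = (if S ⊂ I then insert a I else I) ∨
        Disjoint (insert a S) (if S ⊂ I then insert a I else I) ∨
        insert a S ⊂ (if S ⊂ I then insert a I else I) ∨
        (if S ⊂ I then insert a I else I) ⊂ insert a S := by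
      intro I hI
      rcases hcomm I hI with h | h | h | h
      · subst h
        rw [if_neg (fun hc => hc.2 Subset.rfl)]
        exact Or.inr (Or.inr (Or.inr (ssubset_insert haS')))
      · have hns : ¬ S ⊂ I := fun hc => hNe.ne_empty (by
          have : S ⊆ S ∩ I := subset_inter Subset.rfl hc.1
          rw [(disjoint_iff_inter_eq_empty).1 h, subset_empty] at this
          exact this)
        rw [if_neg hns]
        exact Or.inr (Or.inl (disjoint_insert_left.2 ⟨haI I hI, h⟩))
      · rw [if_pos h]
        exact Or.inr (Or.inr (Or.inl (ins_ssub_ins haS' (haI I hI) h)))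
      · rw [if_neg (fun hc => ssubset_irrefl I (h.trans hc))]
        exact Or.inr (Or.inr (Or.inr (h.trans_subset (subset_insert _ _))))
    intro T1 hT1 T2 hT2 hne
    rw [insFam, mem_insert, mem_image] at hT1 hT2
    rcases hT1 with rfl | ⟨I, hI, rfl⟩ <;> rcases hT2 with h2 | ⟨J, hJ, rfl⟩
    · exact absurd h2.symm hne
    · rcases haux1 J hJ with h | h | h | h
      · exact absurd h hne
      · exact Or.inl h
      · exact Or.inr (Or.inl h)
      · exact Or.inr (Or.inr h)
    · subst h2
      rcases haux1 I hI with h | h | h | h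
      · exact absurd h.symm hne
      · exact Or.inl h.symm
      · exact Or.inr (Or.inr h)
      · exact Or.inr (Or.inl h)
    · have hIJ : I ≠ J := fun h => hne (by rw [h])
      rcases hF'.1.2.2 I hI J hJ hIJ with h | h | h
      · -- disjoint
        have : ¬ (S ⊂ I ∧ S ⊂ J) := by
          rintro ⟨h1, h2⟩
          refine hNe.ne_empty ?_
          have : S ⊆ I ∩ J := subset_inter h1.1 h2.1
          rwa [(disjoint_iff_inter_eq_empty).1 h, subset_empty] at this
        by_cases h1 : S ⊂ I <;> by_cases h2 : S ⊂ J
        · exact absurd ⟨h1, h2⟩ this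
        · rw [if_pos h1, if_neg h2]
          exact Or.inl (disjoint_insert_left.2 ⟨haI J hJ, h⟩)
        · rw [if_neg h1, if_pos h2]
          exact Or.inl (disjoint_insert_right.2 ⟨haI I hI, h⟩)
        · rw [if_neg h1, if_neg h2]; exact Or.inl h
      · exact Or.inr (Or.inl (hmono I hI J hJ h))
      · exact Or.inr (Or.inr (hmono J hJ I hI h))

lemma insFam_isMaxCommFamOn : IsMaxCommFamOn (insert a L') (insFam a S F') := by
  have hSub := hSL' ha hF' hS
  have hNe := hSne ha hF' hS
  have haS' := haS ha hF' hS
  have haI : ∀ I ∈ F', a ∉ I := fun I hI h => ha (hF'.1.1 I hI h)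
  refine ⟨insFam_isCommFamOn ha hF' hS, ?_⟩
  intro G hG hsub
  refine Subset.antisymm ?_ hsub
  intro T hT
  have hAmem : insert a S ∈ G := hsub (by rw [insFam]; exact mem_insert_self _ _)
  have weak : ∀ U ∈ G, ∀ V ∈ G, U = V ∨ Disjoint U V ∨ U ⊂ V ∨ V ⊂ U := by
    intro U hU V hV
    rcases eq_or_ne U V with h | h
    · exact Or.inl h
    · exact Or.inr (hG.2.2 U hU V hV h)
  have hTL : T ⊆ insert a L' := hG.1 T hT
  have hTcard : 1 < T.card := hG.2.1 T hT
  by_cases haT : a ∈ T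
  · -- a ∈ T
    set T₀ := T.erase a with hT0
    have hT0ins : insert a T₀ = T := insert_erase haT
    have haT0 : a ∉ T₀ := notMem_erase _ _
    have hT0ne : T₀.Nonempty := by
      rw [← card_pos, card_erase_of_mem haT]; omega
    have hT0L' : T₀ ⊆ L' := by
      intro x hx
      have hxT := mem_of_mem_erase hx
      rcases mem_insert.1 (hTL hxT) with h | h
      · exact absurd h (ne_of_mem_erase hx)
      · exact h
    rcases weak T hT _ hAmem with h | h | h | h
    · rw [insFam, h]; exact mem_insert_self _ _
    · exact absurd haT (disjoint_left.1 h · (mem_insert_self a S))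
    · -- T ⊂ insert a S : impossible (or T = insert a S)
      exfalso
      have hT0S : T₀ ⊆ S := by
        intro x hx
        rcases mem_insert.1 (h.1 (mem_of_mem_erase hx)) with h' | h'
        · exact absurd h' (ne_of_mem_erase hx)
        · exact h'
      rcases hS with hSF | ⟨b, hb, rfl⟩
      · have hSG : S ∈ G := hsub (by
          rw [insFam, mem_insert]
          exact Or.inr (mem_image.2 ⟨S, hSF, if_neg (ssubset_irrefl S)⟩))
        rcases weak T hT S hSG with h' | h' | h' | h'
        · exact haS' (h' ▸ haT)
        · obtain ⟨x, hx⟩ := hT0ne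
          exact disjoint_left.1 h' (mem_of_mem_erase hx) (hT0S hx)
        · exact haS' (h'.1 haT)
        · -- S ⊂ T, so S ⊆ T₀, so T₀ = S, T = insert a S
          have : S ⊆ T₀ := fun x hx => mem_erase.2 ⟨fun hc => haS' (hc ▸ hx), h'.1 hx⟩
          have hT0Seq : T₀ = S := Subset.antisymm hT0S this
          exact h.2 (by rw [← hT0ins, hT0Seq])
      · -- S = {b}
        have hT0Seq : T₀ = {b} := Subset.antisymm hT0S (singleton_subset_iff.2 (by
          obtain ⟨x, hx⟩ := hT0ne
          have := hT0S hx
          simp at this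
          exact this ▸ hx))
        exact h.2 (by rw [← hT0ins, hT0Seq])
    · -- insert a S ⊂ T
      have hST0 : S ⊆ T₀ := fun x hx => mem_erase.2
        ⟨fun hc => haS' (hc ▸ hx), h.1 (mem_insert_of_mem hx)⟩
      have hST0ne : S ≠ T₀ := by
        intro hc
        exact h.2 (by rw [← hT0ins, ← hc])
      have hT0card : 1 < T₀.card := by
        have h1 := card_lt_card (⟨hST0, fun hc => hST0ne (Subset.antisymm hST0 hc)⟩ : S ⊂ T₀)
        have h2 := card_pos.2 hNe
        omega
      have hT0F : T₀ ∈ F' := by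
        refine mem_of_comm hF' hT0L' hT0card ?_
        intro I hI
        have hgmem : (if S ⊂ I then insert a I else I) ∈ G := hsub (by
          rw [insFam, mem_insert]
          exact Or.inr (mem_image.2 ⟨I, hI, rfl⟩))
        by_cases hSI : S ⊂ I
        · rw [if_pos hSI] at hgmem
          rcases weak T hT _ hgmem with h' | h' | h' | h'
          · refine Or.inl ?_
            have h2 : T₀ = (insert a I).erase a := by rw [← h']
            rwa [erase_insert (haI I hI)] at h2
          · exact absurd haT (disjoint_left.1 h' · (mem_insert_self a I))
          · have : T₀ ⊆ I := by
              rw [← erase_insert (haI I hI)]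
              exact erase_subset_erase _ h'.1
            rcases eq_or_ne T₀ I with hh | hh
            · exact Or.inl hh
            · exact Or.inr (Or.inr (Or.inl ⟨this, fun hc => hh (Subset.antisymm this hc)⟩))
          · have : I ⊆ T₀ := by
              rw [← erase_insert (haI I hI)]
              exact erase_subset_erase _ h'.1
            rcases eq_or_ne T₀ I with hh | hh
            · exact Or.inl hh
            · exact Or.inr (Or.inr (Or.inr ⟨this, fun hc => hh (Subset.antisymm hc this)⟩))
        · rw [if_neg hSI] at hgmem
          rcases weak T hT _ hgmem with h' | h' | h' | h'
          · exact absurd (h' ▸ haT) (haI I hI)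
          · exact Or.inr (Or.inl (disjoint_of_subset_left (erase_subset _ _) h'))
          · exact absurd (h'.1 haT) (haI I hI)
          · have : I ⊆ T₀ := fun x hx => mem_erase.2 ⟨fun hc => (haI I hI) (hc ▸ hx), h'.1 hx⟩
            rcases eq_or_ne T₀ I with hh | hh
            · exact Or.inl hh
            · exact Or.inr (Or.inr (Or.inr ⟨this, fun hc => hh (Subset.antisymm hc this)⟩))
      have hST0ss : S ⊂ T₀ := ⟨hST0, fun hc => hST0ne (Subset.antisymm hST0 hc)⟩
      rw [insFam, mem_insert]
      exact Or.inr (mem_image.2 ⟨T₀, hT0F, by rw [if_pos hST0ss, hT0ins]⟩)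
  · -- a ∉ T
    have hTL' : T ⊆ L' := by
      intro x hx
      rcases mem_insert.1 (hTL hx) with h | h
      · exact absurd (h ▸ hx) haT
      · exact h
    by_cases hTS : T = S
    · subst hTS
      have hTF : T ∈ F' := by
        rcases hS with h | ⟨b, hb, rfl⟩
        · exact h
        · simp at hTcard
      rw [insFam, mem_insert]
      exact Or.inr (mem_image.2 ⟨T, hTF, if_neg (ssubset_irrefl T)⟩)
    · have hnST : ¬ S ⊆ T := by
        intro hc
        rcases weak T hT _ hAmem with h' | h' | h' | h'
        · exact haT (h' ▸ mem_insert_self a S)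
        · obtain ⟨x, hx⟩ := hNe
          exact disjoint_left.1 h' (hc hx) (mem_insert_of_mem hx)
        · refine hTS (Subset.antisymm (fun x hx => ?_) hc)
          rcases mem_insert.1 (h'.1 hx) with h | h
          · exact absurd (h ▸ hx) haT
          · exact h
        · exact haT (h'.1 (mem_insert_self a S))
      have hTF : T ∈ F' := by
        refine mem_of_comm hF' hTL' hTcard ?_
        intro I hI
        have hgmem : (if S ⊂ I then insert a I else I) ∈ G := hsub (by
          rw [insFam, mem_insert]
          exact Or.inr (mem_image.2 ⟨I, hI, rfl⟩))
        by_cases hSI : S ⊂ I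
        · rw [if_pos hSI] at hgmem
          rcases weak T hT _ hgmem with h' | h' | h' | h'
          · exact absurd (h' ▸ haT) (by simp)
          · exact Or.inr (Or.inl (disjoint_of_subset_right (subset_insert _ _) h'))
          · have : T ⊆ I := by
              intro x hx
              rcases mem_insert.1 (h'.1 hx) with h | h
              · exact absurd (h ▸ hx) haT
              · exact h
            rcases eq_or_ne T I with hh | hh
            · exact Or.inl hh
            · exact Or.inr (Or.inr (Or.inl ⟨this, fun hc => hh (Subset.antisymm this hc)⟩))
          · exact absurd (h'.1 (mem_insert_self a I)) haT
        · rw [if_neg hSI] at hgmem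
          rcases weak T hT _ hgmem with h' | h' | h' | h'
          · exact Or.inl h'
          · exact Or.inr (Or.inl h')
          · exact Or.inr (Or.inr (Or.inl h'))
          · exact Or.inr (Or.inr (Or.inr h'))
      rw [insFam, mem_insert]
      refine Or.inr (mem_image.2 ⟨T, hTF, if_neg (fun hc => hnST hc.1)⟩)

lemma del_insFam : ((insFam a S F').image (·.erase a)).filter (fun I => 1 < I.card) = F' := by
  have haS' := haS ha hF' hS
  have haI : ∀ I ∈ F', a ∉ I := fun I hI h => ha (hF'.1.1 I hI h)
  ext J
  rw [mem_filter, mem_image]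
  constructor
  · rintro ⟨⟨T, hT, rfl⟩, hc⟩
    rw [insFam, mem_insert] at hT
    rcases hT with rfl | hT
    · rw [erase_insert haS'] at hc ⊢
      rcases hS with h | ⟨b, hb, rfl⟩
      · exact h
      · simp at hc
    · obtain ⟨I, hI, rfl⟩ := mem_image.1 hT
      by_cases hss : S ⊂ I
      · rwa [if_pos hss, erase_insert (haI I hI)]
      · rwa [if_neg hss, erase_eq_of_notMem (haI I hI)]
  · intro hJ
    refine ⟨⟨if S ⊂ J then insert a J else J, ?_, ?_⟩, hF'.1.2.1 J hJ⟩
    · rw [insFam, mem_insert]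
      exact Or.inr (mem_image.2 ⟨J, hJ, rfl⟩)
    · by_cases hss : S ⊂ J
      · rw [if_pos hss, erase_insert (haI J hJ)]
      · rw [if_neg hss, erase_eq_of_notMem (haI J hJ)]

lemma insFam_min : ∀ T ∈ insFam a S F', a ∈ T → insert a S ⊆ T := by
  have haI : ∀ I ∈ F', a ∉ I := fun I hI h => ha (hF'.1.1 I hI h)
  intro T hT haT
  rw [insFam, mem_insert] at hT
  rcases hT with rfl | hT
  · exact Subset.rfl
  · obtain ⟨I, hI, rfl⟩ := mem_image.1 hT
    by_cases hss : S ⊂ I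
    · rw [if_pos hss] at haT ⊢
      exact insert_subset_insert _ hss.1
    · rw [if_neg hss] at haT
      exact absurd haT (haI I hI)

end Hyp

lemma surj_decomp {F : Finset (Finset α)} (ha : a ∉ L') (hL'ne : L'.Nonempty)
    (hF : IsMaxCommFamOn (insert a L') F) :
    ∃ S F', IsMaxCommFamOn L' F' ∧ (S ∈ F' ∨ ∃ b ∈ L', S = {b}) ∧ insFam a S F' = F := by
  classical
  have haL : a ∈ insert a L' := mem_insert_self _ _
  have hLcard : 1 < (insert a L').card := by
    rw [card_insert_of_notMem ha]
    have := card_pos.2 hL'ne; omega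
  have hLF : insert a L' ∈ F := top_mem hF hLcard
  obtain ⟨P, hPm, hPmin⟩ : ∃ m ∈ F.filter (a ∈ ·), ∀ x ∈ F.filter (a ∈ ·), ¬x < m := by
    obtain ⟨m, hm, hmin⟩ := Finset.exists_minimal (s := F.filter (a ∈ ·))
      ⟨insert a L', mem_filter.2 ⟨hLF, haL⟩⟩
    exact ⟨m, hm, fun x hx hlt => (not_le_of_gt hlt) (hmin hx hlt.le)⟩
  have hPF : P ∈ F := (mem_filter.1 hPm).1
  have haP : a ∈ P := (mem_filter.1 hPm).2
  have hPle : ∀ I ∈ F, a ∈ I → P ⊆ I := by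
    intro I hI haI
    rcases eq_or_ne I P with rfl | hne
    · exact Subset.rfl
    rcases hF.1.2.2 I hI P hPF hne with h | h | h
    · exact absurd haP (disjoint_left.1 h haI)
    · exact absurd h (hPmin I (mem_filter.2 ⟨hI, haI⟩))
    · exact h.1
  set S := P.erase a with hSdef
  have hPcard := hF.1.2.1 P hPF
  have hSP : insert a S = P := insert_erase haP
  have haS : a ∉ S := notMem_erase _ _
  have hSsubP : S ⊆ P := erase_subset _ _
  have hSL' : S ⊆ L' := by
    intro x hx
    rcases mem_insert.1 (hF.1.1 P hPF (mem_of_mem_erase hx)) with h | h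
    · exact absurd h (ne_of_mem_erase hx)
    · exact h
  have hSne : S.Nonempty := by
    rw [← card_pos, card_erase_of_mem haP]; omega
  have hkey : ∀ I ∈ F, S ⊆ I → a ∉ I → I = S := by
    intro I hI hSI haI
    rcases eq_or_ne I P with rfl | hne
    · exact absurd haP haI
    rcases hF.1.2.2 I hI P hPF hne with h | h | h
    · obtain ⟨x, hx⟩ := hSne
      exact absurd (mem_of_mem_erase hx) (disjoint_left.1 h (hSI hx))
    · exact Subset.antisymm (fun x hx => mem_erase.2 ⟨fun hc => haI (hc ▸ hx), h.1 hx⟩) hSI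
    · exact absurd (h.1 haP) haI
  have hSF : 1 < S.card → S ∈ F := by
    intro hScard
    refine mem_of_comm hF (hSL'.trans (subset_insert _ _)) hScard ?_
    intro I hI
    by_cases haI : a ∈ I
    · exact Or.inr (Or.inr (Or.inl ⟨hSsubP.trans (hPle I hI haI),
        fun hc => haS (hc haI)⟩))
    · rcases eq_or_ne I P with rfl | hne
      · exact absurd haP haI
      rcases hF.1.2.2 I hI P hPF hne with h | h | h
      · exact Or.inr (Or.inl (disjoint_of_subset_left hSsubP h.symm))
      · have hIS : I ⊆ S := fun x hx => mem_erase.2 ⟨fun hc => haI (hc ▸ hx), h.1 hx⟩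
        rcases eq_or_ne S I with hh | hh
        · exact Or.inl hh
        · exact Or.inr (Or.inr (Or.inr ⟨hIS, fun hc => hh (Subset.antisymm hc hIS)⟩))
      · exact absurd (h.1 haP) haI
  set F' := (F.image (·.erase a)).filter (fun I => 1 < I.card) with hF'def
  have hmemF' : ∀ J, J ∈ F' ↔ (∃ I ∈ F, I.erase a = J) ∧ 1 < J.card := by
    intro J
    rw [hF'def, mem_filter, mem_image]
  have hdelmemF : ∀ I ∈ F, a ∉ I → 1 < I.card → I ∈ F' := by
    intro I hI haI hc
    exact (hmemF' I).2 ⟨⟨I, hI, erase_eq_of_notMem haI⟩, hc⟩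
  have hL'sub : ∀ I ∈ F, a ∉ I → I ⊆ L' := by
    intro I hI haI x hx
    rcases mem_insert.1 (hF.1.1 I hI hx) with h | h
    · exact absurd (h ▸ hx) haI
    · exact h
  have hF'max : IsMaxCommFamOn L' F' := by
    constructor
    · refine ⟨?_, ?_, ?_⟩
      · intro J hJ
        obtain ⟨⟨I, hI, rfl⟩, hc⟩ := (hmemF' J).1 hJ
        intro x hx
        rcases mem_insert.1 (hF.1.1 I hI (mem_of_mem_erase hx)) with h | h
        · exact absurd h (ne_of_mem_erase hx)
        · exact h
      · intro J hJ; exact ((hmemF' J).1 hJ).2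
      · intro J1 hJ1 J2 hJ2 hne
        obtain ⟨⟨I1, hI1, rfl⟩, hc1⟩ := (hmemF' J1).1 hJ1
        obtain ⟨⟨I2, hI2, rfl⟩, hc2⟩ := (hmemF' J2).1 hJ2
        have hne12 : I1 ≠ I2 := fun h => hne (by rw [h])
        rcases hF.1.2.2 I1 hI1 I2 hI2 hne12 with h | h | h
        · exact Or.inl (disjoint_of_subset_left (erase_subset _ _)
            (disjoint_of_subset_right (erase_subset _ _) h))
        · exact Or.inr (Or.inl ⟨erase_subset_erase _ h.1,
            fun hc => hne (Subset.antisymm (erase_subset_erase _ h.1) hc)⟩)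
        · exact Or.inr (Or.inr ⟨erase_subset_erase _ h.1,
            fun hc => hne (Subset.antisymm hc (erase_subset_erase _ h.1))⟩)
    · intro G hG hsub
      refine Subset.antisymm ?_ hsub
      intro T hT
      have hTL' : T ⊆ L' := hG.1 T hT
      have hTc : 1 < T.card := hG.2.1 T hT
      have haT : a ∉ T := fun h => ha (hTL' h)
      have weak : ∀ J ∈ F', T = J ∨ Disjoint T J ∨ T ⊂ J ∨ J ⊂ T := by
        intro J hJ
        rcases eq_or_ne T J with h | h
        · exact Or.inl h
        · exact Or.inr (hG.2.2 T hT J (hsub hJ) h)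
      by_cases hST : S ⊆ T
      · have hT'F : insert a T ∈ F := by
          refine mem_of_comm hF (insert_subset haL (hTL'.trans (subset_insert _ _)))
            (by rw [card_insert_of_notMem haT]; omega) ?_
          intro I hI
          by_cases haI : a ∈ I
          · have hPI := hPle I hI haI
            have hSI0 : S ⊆ I.erase a := fun x hx =>
              mem_erase.2 ⟨fun hc => haS (hc ▸ hx), hPI (hSsubP hx)⟩
            by_cases hc : 1 < (I.erase a).card
            · have hI0F' : I.erase a ∈ F' := (hmemF' _).2 ⟨⟨I, hI, rfl⟩, hc⟩
              rcases weak _ hI0F' with h' | h' | h' | h'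
              · exact Or.inl (by rw [h', insert_erase haI])
              · exfalso
                obtain ⟨x, hx⟩ := hSne
                exact disjoint_left.1 h' (hST hx) (hSI0 hx)
              · exact Or.inr (Or.inr (Or.inl
                  ((insert_erase haI) ▸ ins_ssub_ins haT (notMem_erase a I) h')))
              · refine Or.inr (Or.inr (Or.inr ⟨?_, ?_⟩))
                · rw [← insert_erase haI]
                  exact insert_subset_insert _ h'.1
                · intro hc2
                  refine h'.2 fun x hx => mem_erase.2
                    ⟨fun hcx => haT (hcx ▸ hx), hc2 (mem_insert_of_mem hx)⟩
            · have hIP : I = P := by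
                refine (eq_of_subset_of_card_le hPI ?_).symm
                have h1 : I.card = (I.erase a).card + 1 := by
                  rw [card_erase_of_mem haI]
                  have := card_pos.2 ⟨a, haI⟩; omega
                omega
              refine Or.inr (Or.inr (Or.inr ⟨?_, ?_⟩))
              · rw [hIP, ← hSP]
                exact insert_subset_insert _ hST
              · intro hc2
                have hTS : T ⊆ S := by
                  intro x hx
                  have := hc2 (mem_insert_of_mem hx)
                  rw [hIP, ← hSP] at this
                  rcases mem_insert.1 this with h | h
                  · exact absurd (h ▸ hx) haT
                  · exact h
                have : T = S := Subset.antisymm hTS hST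
                rw [hIP] at hc
                exact hc (by rw [← hSdef, ← this]; exact hTc)
          · have hIF' : I ∈ F' := hdelmemF I hI haI (hF.1.2.1 I hI)
            rcases weak I hIF' with h' | h' | h' | h'
            · refine Or.inr (Or.inr (Or.inr ?_))
              rw [h']
              exact ssubset_insert haI
            · exact Or.inr (Or.inl (disjoint_insert_left.2 ⟨haI, h'⟩))
            · exfalso
              have : I = S := hkey I hI (hST.trans h'.1) haI
              exact h'.2 (this ▸ hST)
            · exact Or.inr (Or.inr (Or.inr (h'.trans_subset (subset_insert _ _))))
        refine (hmemF' T).2 ⟨⟨insert a T, hT'F, erase_insert haT⟩, hTc⟩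
      · have hTF : T ∈ F := by
          refine mem_of_comm hF (hTL'.trans (subset_insert _ _)) hTc ?_
          intro I hI
          by_cases haI : a ∈ I
          · have hPI := hPle I hI haI
            have hSI0 : S ⊆ I.erase a := fun x hx =>
              mem_erase.2 ⟨fun hc => haS (hc ▸ hx), hPI (hSsubP hx)⟩
            by_cases hc : 1 < (I.erase a).card
            · have hI0F' : I.erase a ∈ F' := (hmemF' _).2 ⟨⟨I, hI, rfl⟩, hc⟩
              rcases weak _ hI0F' with h' | h' | h' | h'
              · exact absurd (h' ▸ hSI0 : S ⊆ T) hST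
              · refine Or.inr (Or.inl ?_)
                rw [← insert_erase haI]
                exact disjoint_insert_right.2 ⟨haT, h'⟩
              · exact Or.inr (Or.inr (Or.inl (h'.trans_subset (erase_subset _ _))))
              · exact absurd ((hSI0.trans h'.1) : S ⊆ T) hST
            · have hI0S : I.erase a = S := by
                refine (eq_of_subset_of_card_le hSI0 ?_).symm
                have := card_pos.2 hSne; omega
              obtain ⟨b, hb⟩ := card_eq_one.1 (by
                have h1 := card_pos.2 hSne
                have h2 : S.card ≤ 1 := by rw [← hI0S]; omega
                omega : S.card = 1)
              refine Or.inr (Or.inl (disjoint_left.2 fun x hx hxI => ?_))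
              rw [← insert_erase haI, hI0S, hb, mem_insert, mem_singleton] at hxI
              rcases hxI with rfl | rfl
              · exact haT hx
              · exact hST (by rw [hb]; exact singleton_subset_iff.2 hx)
          · have hIF' : I ∈ F' := hdelmemF I hI haI (hF.1.2.1 I hI)
            rcases weak I hIF' with h' | h' | h' | h'
            · exact Or.inl h'
            · exact Or.inr (Or.inl h')
            · exact Or.inr (Or.inr (Or.inl h'))
            · exact Or.inr (Or.inr (Or.inr h'))
        exact hdelmemF T hTF haT hTc
  have hSmem : S ∈ F' ∨ ∃ b ∈ L', S = {b} := by
    by_cases hc : 1 < S.card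
    · exact Or.inl (hdelmemF S (hSF hc) haS hc)
    · right
      obtain ⟨b, hb⟩ := card_eq_one.1 (by
        have := card_pos.2 hSne; omega : S.card = 1)
      exact ⟨b, hSL' (hb ▸ mem_singleton_self b), hb⟩
  have hins : insFam a S F' = F := by
    have haI' : ∀ J ∈ F', a ∉ J := by
      intro J hJ h
      obtain ⟨⟨I, hI, rfl⟩, _⟩ := (hmemF' J).1 hJ
      exact notMem_erase _ _ h
    ext T
    rw [insFam, mem_insert]
    constructor
    · rintro (rfl | hT)
      · rwa [hSP]
      · obtain ⟨J, hJ, rfl⟩ := mem_image.1 hT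
        obtain ⟨⟨I, hI, rfl⟩, hc⟩ := (hmemF' J).1 hJ
        by_cases haI : a ∈ I
        · have hSJ : S ⊆ I.erase a := fun x hx =>
            mem_erase.2 ⟨fun hcx => haS (hcx ▸ hx), hPle I hI haI (hSsubP hx)⟩
          by_cases hss : S ⊂ I.erase a
          · rw [if_pos hss, insert_erase haI]; exact hI
          · have hSeq : S = I.erase a := Subset.antisymm hSJ (by
              by_contra hcc
              exact hss ⟨hSJ, fun h2 => hcc h2⟩)
            rw [if_neg hss, ← hSeq]
            exact hSF (hSeq ▸ hc)
        · have he : I.erase a = I := erase_eq_of_notMem haI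
          rw [he]
          by_cases hss : S ⊂ I
          · exact absurd ((hkey I hI hss.1 haI) ▸ hss) (ssubset_irrefl S)
          · rw [if_neg hss]; exact hI
    · intro hT
      by_cases haT : a ∈ T
      · rcases eq_or_ne T P with rfl | hne
        · exact Or.inl hSP.symm
        · have hPT : P ⊆ T := hPle T hT haT
          have hT0c : 1 < (T.erase a).card := by
            have h1 := card_lt_card (⟨hPT, fun hc => hne (Subset.antisymm hc hPT)⟩ : P ⊂ T)
            rw [card_erase_of_mem haT]
            omega
          have hT0F' : T.erase a ∈ F' := (hmemF' _).2 ⟨⟨T, hT, rfl⟩, hT0c⟩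
          have hST0 : S ⊂ T.erase a := by
            refine ⟨fun x hx => mem_erase.2
              ⟨fun hcx => haS (hcx ▸ hx), hPT (hSsubP hx)⟩, ?_⟩
            intro hcc
            apply hne
            refine Subset.antisymm ?_ hPT
            intro x hx
            rcases eq_or_ne x a with rfl | hxa
            · exact haP
            · exact hSP ▸ mem_insert_of_mem (hcc (mem_erase.2 ⟨hxa, hx⟩))
          exact Or.inr (mem_image.2 ⟨T.erase a, hT0F',
            by rw [if_pos hST0, insert_erase haT]⟩)
      · have hTF' : T ∈ F' := hdelmemF T hT haT (hF.1.2.1 T hT)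
        refine Or.inr (mem_image.2 ⟨T, hTF', if_neg fun hss => ?_⟩)
        exact hss.2 (hkey T hT hss.1 haT).le
  exact ⟨S, F', hF'max, hSmem, hins⟩

end Ins

section Count
variable {α : Type} [DecidableEq α]

lemma fam_card {L : Finset α} {F : Finset (Finset α)}
    (hF : IsMaxCommFamOn L F) (hL : L.Nonempty) : F.card + 1 = L.card := by
  obtain ⟨t, hnd, hlv, hgm⟩ := exists_tree L hL F hF
  rw [← hgm, ← hlv]
  exact BTree.card_games t hnd

lemma maxfam_empty_iff {L : Finset α} (hL : L.card = 1) (F : Finset (Finset α)) :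
    IsMaxCommFamOn L F ↔ F = ∅ := by
  constructor
  · intro hF
    rw [eq_empty_iff_forall_notMem]
    intro I hI
    have h1 := card_le_card (hF.1.1 I hI)
    have h2 := hF.1.2.1 I hI
    omega
  · rintro rfl
    refine ⟨⟨by simp, by simp, by simp⟩, ?_⟩
    intro G hG _
    rw [eq_empty_iff_forall_notMem]
    intro I hI
    have h1 := card_le_card (hG.1 I hI)
    have h2 := hG.2.1 I hI
    omega

lemma doubleFactorial_step {m : ℕ} (hm : 2 ≤ m) :
    (2 * m - 3) * Nat.doubleFactorial (2 * (m - 1) - 3) = Nat.doubleFactorial (2 * m - 3) := by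
  rcases eq_or_lt_of_le hm with h | h
  · subst h; rfl
  · obtain ⟨k, rfl⟩ : ∃ k, m = k + 3 := ⟨m - 3, by omega⟩
    have h1 : 2 * (k + 3) - 3 = (2 * k + 1) + 2 := by omega
    have h2 : 2 * (k + 3 - 1) - 3 = 2 * k + 1 := by omega
    rw [h1, h2, Nat.doubleFactorial_add_two]

lemma count_maxfam [Fintype α] :
    ∀ L : Finset α, L.Nonempty →
      Nat.card {F : Finset (Finset α) // IsMaxCommFamOn L F} =
        Nat.doubleFactorial (2 * L.card - 3) := by
  intro L
  induction L using Finset.strongInduction with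
  | _ L ih =>
    intro hLne
    rcases eq_or_lt_of_le (Finset.one_le_card.2 hLne) with hcard | hL2
    · -- card L = 1
      have h1 : L.card = 1 := hcard.symm
      rw [h1]
      have : ∀ F : Finset (Finset α), IsMaxCommFamOn L F ↔ F = ∅ := maxfam_empty_iff h1
      have hrfl : Nat.doubleFactorial (2 * 1 - 3) = 1 := rfl
      rw [hrfl, Nat.card_eq_one_iff_unique]
      constructor
      · constructor
        intro ⟨F1, hF1⟩ ⟨F2, hF2⟩
        have := ((this F1).1 hF1).trans (((this F2).1 hF2)).symm
        exact Subtype.ext this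
      · exact ⟨⟨∅, (this ∅).2 rfl⟩⟩
    · -- card L ≥ 2
      obtain ⟨a, haL⟩ := hLne
      set L' := L.erase a with hL'def
      have ha : a ∉ L' := notMem_erase _ _
      have hLins : insert a L' = L := insert_erase haL
      have hL'card : L'.card = L.card - 1 := card_erase_of_mem haL
      have hL'ne : L'.Nonempty := by rw [← card_pos]; omega
      have hL'ssub : L' ⊂ L := erase_ssubset haL
      -- the bijection
      let Φ : (Σ F' : {F' : Finset (Finset α) // IsMaxCommFamOn L' F'},
          {S : Finset α // S ∈ F'.1 ∨ ∃ b ∈ L', S = {b}}) →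
          {F : Finset (Finset α) // IsMaxCommFamOn L F} :=
        fun p => ⟨insFam a p.2.1 p.1.1,
          hLins ▸ insFam_isMaxCommFamOn ha p.1.2 p.2.2⟩
      have hbij : Function.Bijective Φ := by
        constructor
        · rintro ⟨⟨F1, hF1⟩, S1, hS1⟩ ⟨⟨F2, hF2⟩, S2, hS2⟩ h
          have h' : insFam a S1 F1 = insFam a S2 F2 := congrArg Subtype.val h
          have hFeq : F1 = F2 := by
            rw [← del_insFam ha hF1 hS1, ← del_insFam ha hF2 hS2, h']
          subst hFeq
          have hSeq : S1 = S2 := by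
            have h1 : insert a S1 ⊆ insert a S2 := by
              refine insFam_min ha hF1 hS1 _ ?_ (mem_insert_self _ _)
              rw [h', insFam]; exact mem_insert_self _ _
            have h2 : insert a S2 ⊆ insert a S1 := by
              refine insFam_min ha hF1 hS2 _ ?_ (mem_insert_self _ _)
              rw [← h', insFam]; exact mem_insert_self _ _
            have h3 : insert a S1 = insert a S2 := Subset.antisymm h1 h2
            rw [← erase_insert (haS ha hF1 hS1), ← erase_insert (haS ha hF1 hS2), h3]
          subst hSeq
          rfl
        · rintro ⟨F, hF⟩
          obtain ⟨S, F', hF', hS, hins⟩ := surj_decomp ha hL'ne (hLins ▸ hF)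
          exact ⟨⟨⟨F', hF'⟩, ⟨S, hS⟩⟩, Subtype.ext hins⟩
      rw [← Nat.card_eq_of_bijective Φ hbij]
      haveI : Fintype {F' : Finset (Finset α) // IsMaxCommFamOn L' F'} := Fintype.ofFinite _
      haveI : ∀ F' : {F' : Finset (Finset α) // IsMaxCommFamOn L' F'},
          Fintype {S : Finset α // S ∈ F'.1 ∨ ∃ b ∈ L', S = {b}} :=
        fun F' => Fintype.ofFinite _
      have hfiber : ∀ F' : {F' : Finset (Finset α) // IsMaxCommFamOn L' F'},
          Nat.card {S : Finset α // S ∈ F'.1 ∨ ∃ b ∈ L', S = {b}} = 2 * L.card - 3 := by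
        rintro ⟨F', hF'⟩
        have hiff : ∀ S : Finset α, (S ∈ F' ∨ ∃ b ∈ L', S = {b}) ↔
            S ∈ F' ∪ L'.image (fun b => ({b} : Finset α)) := by
          intro S
          rw [mem_union, mem_image]
          constructor
          · rintro (h | ⟨b, hb, rfl⟩)
            · exact Or.inl h
            · exact Or.inr ⟨b, hb, rfl⟩
          · rintro (h | ⟨b, hb, rfl⟩)
            · exact Or.inl h
            · exact Or.inr ⟨b, hb, rfl⟩
        rw [Nat.card_congr (Equiv.subtypeEquivRight hiff), Nat.card_eq_fintype_card,
          Fintype.card_coe, card_union_of_disjoint, card_image_of_injective _ singleton_injective]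
        · have h1 := fam_card hF' hL'ne
          omega
        · rw [disjoint_left]
          rintro I hI hI2
          obtain ⟨b, _, rfl⟩ := mem_image.1 hI2
          have := hF'.1.2.1 _ hI
          simp at this
      rw [Nat.card_eq_fintype_card, Fintype.card_sigma]
      have : ∀ F' : {F' : Finset (Finset α) // IsMaxCommFamOn L' F'},
          Fintype.card {S : Finset α // S ∈ F'.1 ∨ ∃ b ∈ L', S = {b}} = 2 * L.card - 3 := by
        intro F'
        rw [← Nat.card_eq_fintype_card]
        exact hfiber F'
      rw [Finset.sum_congr rfl (fun F' _ => this F'), Finset.sum_const, smul_eq_mul,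
        Finset.card_univ, ← Nat.card_eq_fintype_card]
      rw [ih L' hL'ssub hL'ne, hL'card]
      rw [mul_comm]
      exact doubleFactorial_step hL2

end Count

section Final

lemma labeling_leaves {n : ℕ} {t : BTree (Fin n)} (h : t.IsLabeling) :
    t.leaves = Finset.univ := by
  ext x
  simp [BTree.leaves_eq_toFinset, List.mem_toFinset, h.2 x]

def gamesQ {n : ℕ} : Quot (@BTree.TreeEq (Fin n)) → Finset (Finset (Fin n)) :=
  Quot.lift BTree.games fun _ _ h => h.games_eq

def bracketFam {n : ℕ} (b : TBracket n) :
    {F : Finset (Finset (Fin n)) // IsMaxCommFamOn Finset.univ F} :=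
  ⟨gamesQ b.1, by
    obtain ⟨t, ht, hlab⟩ := b.2
    rw [← ht]
    show IsMaxCommFamOn Finset.univ t.games
    have := BTree.games_isMaxCommFamOn t hlab.1
    rwa [labeling_leaves hlab] at this⟩

lemma bracketFam_bijective (n : ℕ) (hn : 2 ≤ n) : Function.Bijective (@bracketFam n) := by
  haveI : NeZero n := ⟨by omega⟩
  constructor
  · rintro ⟨q1, hq1⟩ ⟨q2, hq2⟩ h
    obtain ⟨t1, rfl, lab1⟩ := hq1
    obtain ⟨t2, rfl, lab2⟩ := hq2
    have hg : t1.games = t2.games := congrArg Subtype.val h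
    have hteq : BTree.TreeEq t1 t2 :=
      BTree.treeEq_of_games_eq t1 t2 lab1.1 lab2.1
        (by rw [labeling_leaves lab1, labeling_leaves lab2]) hg
    exact Subtype.ext (Quot.sound hteq)
  · rintro ⟨F, hF⟩
    obtain ⟨t, hnd, hlv, hgm⟩ := exists_tree Finset.univ Finset.univ_nonempty F hF
    have hlab : t.IsLabeling := ⟨hnd, fun x => by
      rw [← List.mem_toFinset, ← BTree.leaves_eq_toFinset, hlv]
      exact mem_univ x⟩
    exact ⟨⟨Quot.mk _ t, t, rfl, hlab⟩, Subtype.ext hgm⟩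

/-- The maximal commuting families of `{0,...,n-1}` are in bijection with
single-elimination tournament brackets of `n` teams, the bijection being induced
by taking the set of games of a bracket; their number is `(2n-3)!!`. -/
theorem maxCommFam_equiv_brackets (n : ℕ) (hn : 2 ≤ n) :
    (∃ e : TBracket n ≃ {F : Finset (Finset (Fin n)) // IsMaxCommFamOn Finset.univ F},
      ∀ (t : BTree (Fin n)) (h : t.IsLabeling),
        ((e ⟨Quot.mk _ t, t, rfl, h⟩ : {F : Finset (Finset (Fin n)) //
            IsMaxCommFamOn Finset.univ F}) : Finset (Finset (Fin n))) = t.games) ∧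
    Nat.card {F : Finset (Finset (Fin n)) // IsMaxCommFamOn Finset.univ F} =
      Nat.doubleFactorial (2 * n - 3) := by
  haveI : NeZero n := ⟨by omega⟩
  constructor
  · refine ⟨Equiv.ofBijective _ (bracketFam_bijective n hn), ?_⟩
    intro t h
    rfl
  · rw [count_maxfam Finset.univ Finset.univ_nonempty, Finset.card_univ, Fintype.card_fin]

end Final
end

section
/- With notation as in the convolution of KZ-type equations: for I ⊆ L_n^0 = {1,...,n-1} with |I| ≥ 2, j ∈ I, k ∈ L_n^0 \ I, and v ∈ ℂ^N, the convolution matrix Ã_I = Σ_{{p,q}⊆I} Ã_{pq} satisfies: (a) Ã_I (v)_J = (A_I v)_J whenever I ⊆ J ⊆ L_n^0 (meaning on the diagonal sum embedding ι_J); (b) Ã_I (v)_j = (A_{0I} v)_j - (A_{0j} v)_I; (c) Ã_I (v)_k = (A_I v)_k. -/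
open Finset Matrix

/-- `A_I = ∑_{{p,q} ⊆ I, p < q} A_{pq}` (which is `0` when `|I| ≤ 1`). -/
noncomputable def resSum {N : ℕ} {ι : Type*} [LinearOrder ι] [DecidableEq ι]
    (A : ι → ι → Matrix (Fin N) (Fin N) ℂ) (I : Finset ι) :
    Matrix (Fin N) (Fin N) ℂ :=
  ∑ p ∈ I, ∑ q ∈ I.filter (fun q => p < q), A p q

/-- The Haraoka convolution block matrix `Ã_{ij}` for `1 ≤ i < j ≤ n-1`
(here `i j : Fin m` with `m = n-1` label the nonzero points `i+1, j+1`):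
block diagonal `A_{ij}` except for the four blocks in rows/columns `i, j`. -/
noncomputable def tAfin {m N : ℕ}
    (A : Fin (m + 1) → Fin (m + 1) → Matrix (Fin N) (Fin N) ℂ) (i j : Fin m) :
    Matrix (Fin m × Fin N) (Fin m × Fin N) ℂ :=
  Matrix.of fun x y =>
    (if x.1 = i ∧ y.1 = i then (A i.succ j.succ + A 0 j.succ) x.2 y.2 else 0) +
    (if x.1 = i ∧ y.1 = j then (-(A 0 j.succ)) x.2 y.2 else 0) +
    (if x.1 = j ∧ y.1 = i then (-(A 0 i.succ)) x.2 y.2 else 0) +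
    (if x.1 = j ∧ y.1 = j then (A i.succ j.succ + A 0 i.succ) x.2 y.2 else 0) +
    (if x.1 = y.1 ∧ x.1 ≠ i ∧ x.1 ≠ j then (A i.succ j.succ) x.2 y.2 else 0)

/-- The Dettweiler–Reiter convolution block matrix `Ã_{0k}`:
its `k`-th block row is `(A_{01}, …, A_{0k} + μ, …, A_{0,n-1})`, zero elsewhere. -/
noncomputable def tA0 {m N : ℕ}
    (A : Fin (m + 1) → Fin (m + 1) → Matrix (Fin N) (Fin N) ℂ) (μ : ℂ) (k : Fin m) :
    Matrix (Fin m × Fin N) (Fin m × Fin N) ℂ :=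
  Matrix.of fun x y =>
    if x.1 = k then
      (A 0 y.1.succ + if y.1 = k then μ • (1 : Matrix (Fin N) (Fin N) ℂ) else 0) x.2 y.2
    else 0

/-- `Ã_I = ∑_{{p,q} ⊆ I} Ã_{pq}` for `I ⊆ L_n^0 = {1,…,n-1}`. -/
noncomputable def tRes {m N : ℕ}
    (A : Fin (m + 1) → Fin (m + 1) → Matrix (Fin N) (Fin N) ℂ) (I : Finset (Fin m)) :
    Matrix (Fin m × Fin N) (Fin m × Fin N) ℂ :=
  ∑ p ∈ I, ∑ q ∈ I.filter (fun q => p < q), tAfin A p q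

/-- `(v)_j = ι_j(v)`: places `v ∈ ℂ^N` in block `j` of `ℂ^{(n-1)N}`. -/
def iotaB {m N : ℕ} (j : Fin m) (v : Fin N → ℂ) : Fin m × Fin N → ℂ :=
  fun x => if x.1 = j then v x.2 else 0

/-- `(v)_J = ∑_{j ∈ J} (v)_j`. -/
def iotaS {m N : ℕ} (J : Finset (Fin m)) (v : Fin N → ℂ) : Fin m × Fin N → ℂ :=
  fun x => if x.1 ∈ J then v x.2 else 0


section ConvAux

variable {m N : ℕ}

lemma sum_mulVec' {α n n' : Type*} [Fintype n'] (s : Finset α)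
    (M : α → Matrix n n' ℂ) (v : n' → ℂ) :
    (∑ i ∈ s, M i).mulVec v = ∑ i ∈ s, (M i).mulVec v := by
  ext x
  simp only [Matrix.mulVec, dotProduct, Finset.sum_apply, Matrix.sum_apply,
    Finset.sum_mul]
  exact Finset.sum_comm

lemma mulVec_sum' {α n n' : Type*} [Fintype n'] (s : Finset α)
    (M : Matrix n n' ℂ) (u : α → n' → ℂ) :
    M.mulVec (∑ i ∈ s, u i) = ∑ i ∈ s, M.mulVec (u i) := by
  ext x
  simp only [Matrix.mulVec, dotProduct, Finset.sum_apply, Finset.mul_sum]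
  exact Finset.sum_comm

lemma iotaB_add (j : Fin m) (u w : Fin N → ℂ) :
    iotaB j (u + w) = iotaB j u + iotaB j w := by
  funext x
  simp only [iotaB, Pi.add_apply]
  split <;> simp

lemma iotaB_neg (j : Fin m) (u : Fin N → ℂ) :
    iotaB j (-u) = -(iotaB j u) := by
  funext x
  simp only [iotaB, Pi.neg_apply]
  split <;> simp

lemma iotaB_sum {α : Type*} (j : Fin m) (s : Finset α) (u : α → Fin N → ℂ) :
    iotaB j (∑ i ∈ s, u i) = ∑ i ∈ s, iotaB j (u i) := by
  funext x
  simp only [iotaB, Finset.sum_apply]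
  split <;> simp

lemma iotaB_mulVec_add (j : Fin m) (B C : Matrix (Fin N) (Fin N) ℂ) (v : Fin N → ℂ) :
    iotaB j ((B + C).mulVec v) = iotaB j (B.mulVec v) + iotaB j (C.mulVec v) := by
  rw [Matrix.add_mulVec, iotaB_add]

lemma iotaB_mulVec_sum {α : Type*} (j : Fin m) (s : Finset α)
    (B : α → Matrix (Fin N) (Fin N) ℂ) (v : Fin N → ℂ) :
    iotaB j ((∑ i ∈ s, B i).mulVec v) = ∑ i ∈ s, iotaB j ((B i).mulVec v) := by
  rw [sum_mulVec', iotaB_sum]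

lemma iotaS_eq_sum (J : Finset (Fin m)) (v : Fin N → ℂ) :
    iotaS J v = ∑ j ∈ J, iotaB j v := by
  funext x
  simp only [iotaS, Finset.sum_apply, iotaB]
  rw [Finset.sum_ite_eq]

lemma iotaS_sum {α : Type*} (J : Finset (Fin m)) (s : Finset α) (u : α → Fin N → ℂ) :
    iotaS J (∑ i ∈ s, u i) = ∑ i ∈ s, iotaS J (u i) := by
  funext x
  simp only [iotaS, Finset.sum_apply]
  split <;> simp

/-- block matrix with `B` placed at block `(a, b)`. -/
noncomputable def Eblk (a b : Fin m) (B : Matrix (Fin N) (Fin N) ℂ) :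
    Matrix (Fin m × Fin N) (Fin m × Fin N) ℂ :=
  Matrix.of fun x y => if x.1 = a ∧ y.1 = b then B x.2 y.2 else 0

/-- block diagonal `B` except zero at blocks `p`, `q`. -/
noncomputable def Dblk (p q : Fin m) (B : Matrix (Fin N) (Fin N) ℂ) :
    Matrix (Fin m × Fin N) (Fin m × Fin N) ℂ :=
  Matrix.of fun x y => if x.1 = y.1 ∧ x.1 ≠ p ∧ x.1 ≠ q then B x.2 y.2 else 0

lemma tAfin_eq (A : Fin (m + 1) → Fin (m + 1) → Matrix (Fin N) (Fin N) ℂ) (i j : Fin m) :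
    tAfin A i j
      = Eblk i i (A i.succ j.succ + A 0 j.succ) + Eblk i j (-(A 0 j.succ))
        + Eblk j i (-(A 0 i.succ)) + Eblk j j (A i.succ j.succ + A 0 i.succ)
        + Dblk i j (A i.succ j.succ) := by
  ext x y
  simp [tAfin, Eblk, Dblk, Matrix.add_apply]

lemma Eblk_mulVec_iotaB (a b j : Fin m) (B : Matrix (Fin N) (Fin N) ℂ) (v : Fin N → ℂ) :
    (Eblk a b B).mulVec (iotaB j v) = if b = j then iotaB a (B.mulVec v) else 0 := by
  funext x
  simp only [Matrix.mulVec, dotProduct]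
  rw [Fintype.sum_prod_type]
  simp only [Eblk, Matrix.of_apply, iotaB]
  rw [Finset.sum_eq_single b
    (fun y1 _ hy1 => Finset.sum_eq_zero fun y2 _ => by
      rw [if_neg (fun h => hy1 h.2), zero_mul])
    (fun h => absurd (Finset.mem_univ b) h)]
  by_cases h3 : b = j
  · subst h3
    by_cases h2 : x.1 = a
    · simp [h2, iotaB, Matrix.mulVec, dotProduct]
    · simp [h2, iotaB]
  · simp [h3]

lemma Dblk_mulVec_iotaB (p q j : Fin m) (B : Matrix (Fin N) (Fin N) ℂ) (v : Fin N → ℂ) :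
    (Dblk p q B).mulVec (iotaB j v)
      = if j ≠ p ∧ j ≠ q then iotaB j (B.mulVec v) else 0 := by
  funext x
  simp only [Matrix.mulVec, dotProduct]
  rw [Fintype.sum_prod_type]
  simp only [Dblk, Matrix.of_apply, iotaB]
  rw [Finset.sum_eq_single j
    (fun y1 _ hy1 => Finset.sum_eq_zero fun y2 _ => by
      rw [if_neg hy1, mul_zero])
    (fun h => absurd (Finset.mem_univ j) h)]
  by_cases hc : x.1 = j ∧ x.1 ≠ p ∧ x.1 ≠ q
  · obtain ⟨h1, h2, h3⟩ := hc
    have hcond : j ≠ p ∧ j ≠ q := ⟨by rw [← h1]; exact h2, by rw [← h1]; exact h3⟩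
    rw [if_pos hcond]
    simp [h1, hcond.1, hcond.2, iotaB, Matrix.mulVec, dotProduct]
  · rw [Finset.sum_eq_zero fun y2 _ => by rw [if_neg hc, zero_mul]]
    by_cases hcond : j ≠ p ∧ j ≠ q
    · rw [if_pos hcond]
      have hxj : x.1 ≠ j := fun h =>
        hc ⟨h, by rw [h]; exact hcond.1, by rw [h]; exact hcond.2⟩
      simp [iotaB, hxj]
    · rw [if_neg hcond]
      simp

lemma tAfin_mulVec_left (A : Fin (m + 1) → Fin (m + 1) → Matrix (Fin N) (Fin N) ℂ)
    {p q : Fin m} (hpq : p ≠ q) (v : Fin N → ℂ) :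
    (tAfin A p q).mulVec (iotaB p v)
      = iotaB p ((A p.succ q.succ + A 0 q.succ).mulVec v)
        - iotaB q ((A 0 p.succ).mulVec v) := by
  rw [tAfin_eq, Matrix.add_mulVec, Matrix.add_mulVec, Matrix.add_mulVec, Matrix.add_mulVec,
    Eblk_mulVec_iotaB, Eblk_mulVec_iotaB, Eblk_mulVec_iotaB, Eblk_mulVec_iotaB,
    Dblk_mulVec_iotaB]
  rw [if_pos rfl, if_neg (Ne.symm hpq), if_pos rfl, if_neg (Ne.symm hpq),
    if_neg (by simp), Matrix.neg_mulVec, iotaB_neg]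
  abel

lemma tAfin_mulVec_right (A : Fin (m + 1) → Fin (m + 1) → Matrix (Fin N) (Fin N) ℂ)
    {p q : Fin m} (hpq : p ≠ q) (v : Fin N → ℂ) :
    (tAfin A p q).mulVec (iotaB q v)
      = iotaB q ((A p.succ q.succ + A 0 p.succ).mulVec v)
        - iotaB p ((A 0 q.succ).mulVec v) := by
  rw [tAfin_eq, Matrix.add_mulVec, Matrix.add_mulVec, Matrix.add_mulVec, Matrix.add_mulVec,
    Eblk_mulVec_iotaB, Eblk_mulVec_iotaB, Eblk_mulVec_iotaB, Eblk_mulVec_iotaB,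
    Dblk_mulVec_iotaB]
  rw [if_neg hpq, if_pos rfl, if_neg hpq, if_pos rfl,
    if_neg (by simp), Matrix.neg_mulVec, iotaB_neg]
  abel

lemma tAfin_mulVec_other (A : Fin (m + 1) → Fin (m + 1) → Matrix (Fin N) (Fin N) ℂ)
    {p q j : Fin m} (hjp : j ≠ p) (hjq : j ≠ q) (v : Fin N → ℂ) :
    (tAfin A p q).mulVec (iotaB j v) = iotaB j ((A p.succ q.succ).mulVec v) := by
  rw [tAfin_eq, Matrix.add_mulVec, Matrix.add_mulVec, Matrix.add_mulVec, Matrix.add_mulVec,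
    Eblk_mulVec_iotaB, Eblk_mulVec_iotaB, Eblk_mulVec_iotaB, Eblk_mulVec_iotaB,
    Dblk_mulVec_iotaB]
  rw [if_neg (Ne.symm hjp), if_neg (Ne.symm hjq), if_neg (Ne.symm hjp),
    if_neg (Ne.symm hjq), if_pos ⟨hjp, hjq⟩]
  abel

lemma sum_filter_lt_add_gt {M' : Type*} [AddCommMonoid M'] {ι : Type*} [LinearOrder ι]
    {s : Finset ι} {j : ι} (hj : j ∉ s) (g : ι → M') :
    (∑ p ∈ s.filter (fun q => q < j), g p) + ∑ p ∈ s.filter (fun q => j < q), g p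
      = ∑ p ∈ s, g p := by
  rw [← Finset.sum_filter_add_sum_filter_not s (fun q => q < j) g]
  congr 1
  refine Finset.sum_congr (Finset.filter_congr fun q hq => ?_) fun _ _ => rfl
  have hne : j ≠ q := fun e => hj (e ▸ hq)
  simp only [not_lt]
  exact ⟨le_of_lt, fun h => lt_of_le_of_ne h hne⟩

lemma pair_sum_insert {M' : Type*} [AddCommMonoid M'] {ι : Type*} [LinearOrder ι]
    [DecidableEq ι] {s : Finset ι} {j : ι} (hj : j ∉ s) (f : ι → ι → M') :
    (∑ p ∈ insert j s, ∑ q ∈ (insert j s).filter (fun q => p < q), f p q)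
      = ((∑ p ∈ s.filter (fun q => q < j), f p j)
          + ∑ q ∈ s.filter (fun q => j < q), f j q)
        + ∑ p ∈ s, ∑ q ∈ s.filter (fun q => p < q), f p q := by
  rw [Finset.sum_insert hj]
  have h1 : (insert j s).filter (fun q => j < q) = s.filter (fun q => j < q) := by
    rw [Finset.filter_insert, if_neg (lt_irrefl j)]
  have h2 : ∀ p ∈ s, (∑ q ∈ (insert j s).filter (fun q => p < q), f p q)
      = (if p < j then f p j else 0) + ∑ q ∈ s.filter (fun q => p < q), f p q := by
    intro p hp
    rw [Finset.filter_insert]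
    by_cases hpj : p < j
    · rw [if_pos hpj, Finset.sum_insert (by simp [hj]), if_pos hpj]
    · rw [if_neg hpj, if_neg hpj, zero_add]
  rw [h1, Finset.sum_congr rfl h2, Finset.sum_add_distrib, ← Finset.sum_filter]
  abel

lemma pair_sum_split {M' : Type*} [AddCommMonoid M'] {ι : Type*} [LinearOrder ι]
    [DecidableEq ι] {I : Finset ι} {j : ι} (hj : j ∈ I) (f : ι → ι → M') :
    (∑ p ∈ I, ∑ q ∈ I.filter (fun q => p < q), f p q)
      = ((∑ p ∈ (I.erase j).filter (fun q => q < j), f p j)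
          + ∑ q ∈ (I.erase j).filter (fun q => j < q), f j q)
        + ∑ p ∈ I.erase j, ∑ q ∈ (I.erase j).filter (fun q => p < q), f p q := by
  conv_lhs => rw [← Finset.insert_erase hj]
  exact pair_sum_insert (Finset.notMem_erase j I) f

lemma resSum_insert {ι : Type*} [LinearOrder ι] [DecidableEq ι]
    (A : ι → ι → Matrix (Fin N) (Fin N) ℂ) (hs : ∀ i j, A i j = A j i)
    {S : Finset ι} {a : ι} (ha : a ∉ S) :
    resSum A (insert a S) = resSum A S + ∑ q ∈ S, A a q := by
  unfold resSum
  rw [pair_sum_insert ha]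
  have h1 : (∑ p ∈ S.filter (fun q => q < a), A p a)
      = ∑ p ∈ S.filter (fun q => q < a), A a p :=
    Finset.sum_congr rfl fun p _ => hs p a
  rw [h1, sum_filter_lt_add_gt ha]
  abel

lemma resSum_image (A : Fin (m + 1) → Fin (m + 1) → Matrix (Fin N) (Fin N) ℂ)
    (I : Finset (Fin m)) :
    resSum A (I.image Fin.succ)
      = ∑ p ∈ I, ∑ q ∈ I.filter (fun q => p < q), A p.succ q.succ := by
  unfold resSum
  rw [Finset.sum_image (fun x _ y _ h => Fin.succ_injective m h)]
  refine Finset.sum_congr rfl fun p hp => ?_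
  have key : (I.image Fin.succ).filter (fun q => p.succ < q)
      = (I.filter (fun q => p < q)).image Fin.succ := by
    ext q
    simp only [Finset.mem_filter, Finset.mem_image]
    constructor
    · rintro ⟨⟨a, ha, rfl⟩, hlt⟩
      exact ⟨a, ⟨ha, Fin.succ_lt_succ_iff.mp hlt⟩, rfl⟩
    · rintro ⟨a, ⟨ha, hlt⟩, rfl⟩
      exact ⟨⟨a, ha, rfl⟩, Fin.succ_lt_succ_iff.mpr hlt⟩
  rw [key, Finset.sum_image (fun x _ y _ h => Fin.succ_injective m h)]

lemma tRes_mulVec_not_mem (A : Fin (m + 1) → Fin (m + 1) → Matrix (Fin N) (Fin N) ℂ)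
    (s : Finset (Fin m)) {k : Fin m} (hk : k ∉ s) (v : Fin N → ℂ) :
    (tRes A s).mulVec (iotaB k v)
      = iotaB k ((resSum A (s.image Fin.succ)).mulVec v) := by
  unfold tRes
  rw [sum_mulVec', resSum_image, iotaB_mulVec_sum]
  refine Finset.sum_congr rfl fun p hp => ?_
  rw [sum_mulVec', iotaB_mulVec_sum]
  refine Finset.sum_congr rfl fun q hq => ?_
  exact tAfin_mulVec_other A (fun h => hk (by rw [h]; exact hp))
    (fun h => hk (by rw [h]; exact (Finset.mem_filter.mp hq).1)) v

lemma tAfin_mulVec_iotaS (A : Fin (m + 1) → Fin (m + 1) → Matrix (Fin N) (Fin N) ℂ)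
    {p q : Fin m} (hpq : p ≠ q) {J : Finset (Fin m)} (hp : p ∈ J) (hq : q ∈ J)
    (v : Fin N → ℂ) :
    (tAfin A p q).mulVec (iotaS J v) = iotaS J ((A p.succ q.succ).mulVec v) := by
  rw [iotaS_eq_sum, iotaS_eq_sum, mulVec_sum']
  have key : ∀ l ∈ J, (tAfin A p q).mulVec (iotaB l v)
      = iotaB l ((A p.succ q.succ).mulVec v)
        + ((if l = p then iotaB p ((A 0 q.succ).mulVec v) - iotaB q ((A 0 p.succ).mulVec v)
              else 0)
          + (if l = q then iotaB q ((A 0 p.succ).mulVec v) - iotaB p ((A 0 q.succ).mulVec v)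
              else 0)) := by
    intro l _
    by_cases hlp : l = p
    · subst hlp
      rw [if_pos rfl, if_neg hpq, tAfin_mulVec_left A hpq, iotaB_mulVec_add]
      abel
    · by_cases hlq : l = q
      · subst hlq
        rw [if_neg hlp, if_pos rfl, tAfin_mulVec_right A hpq, iotaB_mulVec_add]
        abel
      · rw [if_neg hlp, if_neg hlq, tAfin_mulVec_other A hlp hlq]
        abel
  rw [Finset.sum_congr rfl key, Finset.sum_add_distrib, Finset.sum_add_distrib,
    Finset.sum_ite_eq' J p, Finset.sum_ite_eq' J q, if_pos hp, if_pos hq]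
  abel

end ConvAux

/-- Action of the convolution matrix `Ã_I` on the block embeddings:
(a) `Ã_I (v)_J = (A_I v)_J` for `I ⊆ J ⊆ L_n^0`;
(b) `Ã_I (v)_j = (A_{0I} v)_j - (A_{0j} v)_I` for `j ∈ I`;
(c) `Ã_I (v)_k = (A_I v)_k` for `k ∉ I`. -/
theorem tRes_blockAction {m N : ℕ}
    (A : Fin (m + 1) → Fin (m + 1) → Matrix (Fin N) (Fin N) ℂ)
    (hsymm : ∀ i j, A i j = A j i)
    (h4 : ∀ i j k l : Fin (m + 1), i ≠ j → i ≠ k → i ≠ l → j ≠ k → j ≠ l → k ≠ l →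
      Commute (A i j) (A k l))
    (h3 : ∀ i j k : Fin (m + 1), i ≠ j → i ≠ k → j ≠ k →
      Commute (A i j) (A i k + A j k))
    (I : Finset (Fin m)) (hI : 2 ≤ I.card) (v : Fin N → ℂ) :
    (∀ J : Finset (Fin m), I ⊆ J →
        (tRes A I).mulVec (iotaS J v) =
          iotaS J ((resSum A (I.image Fin.succ)).mulVec v)) ∧
    (∀ j : Fin m, j ∈ I →
        (tRes A I).mulVec (iotaB j v) =
          iotaB j ((resSum A (insert 0 (I.image Fin.succ))).mulVec v) -
            iotaS I ((A 0 j.succ).mulVec v)) ∧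
    (∀ k : Fin m, k ∉ I →
        (tRes A I).mulVec (iotaB k v) =
          iotaB k ((resSum A (I.image Fin.succ)).mulVec v)) := by
  refine ⟨?_, ?_, ?_⟩
  · -- (a)
    intro J hIJ
    unfold tRes
    rw [sum_mulVec']
    have h1 : ∀ p ∈ I, (∑ q ∈ I.filter (fun q => p < q), tAfin A p q).mulVec (iotaS J v)
        = ∑ q ∈ I.filter (fun q => p < q), iotaS J ((A p.succ q.succ).mulVec v) := by
      intro p hp
      rw [sum_mulVec']
      refine Finset.sum_congr rfl fun q hq => ?_
      have hq' := Finset.mem_filter.mp hq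
      exact tAfin_mulVec_iotaS A hq'.2.ne (hIJ hp) (hIJ hq'.1) v
    rw [Finset.sum_congr rfl h1, resSum_image, sum_mulVec', iotaS_sum]
    exact Finset.sum_congr rfl fun p _ => by rw [sum_mulVec', iotaS_sum]
  · -- (b)
    intro j hj
    have hjE : j ∉ I.erase j := Finset.notMem_erase j I
    have hLHS : ∀ s : Finset (Fin m), (tRes A s).mulVec (iotaB j v)
        = ∑ p ∈ s, ∑ q ∈ s.filter (fun q => p < q), (tAfin A p q).mulVec (iotaB j v) := by
      intro s
      unfold tRes
      rw [sum_mulVec']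
      exact Finset.sum_congr rfl fun p _ => sum_mulVec' _ _ _
    rw [hLHS I, pair_sum_split hj (fun p q => (tAfin A p q).mulVec (iotaB j v))]
    rw [← hLHS (I.erase j), tRes_mulVec_not_mem A _ hjE v]
    have hT1 : (∑ p ∈ (I.erase j).filter (fun q => q < j), (tAfin A p j).mulVec (iotaB j v))
        = ∑ p ∈ (I.erase j).filter (fun q => q < j),
            (iotaB j ((A j.succ p.succ + A 0 p.succ).mulVec v)
              - iotaB p ((A 0 j.succ).mulVec v)) := by
      refine Finset.sum_congr rfl fun p hp => ?_
      have hlt : p < j := (Finset.mem_filter.mp hp).2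
      rw [tAfin_mulVec_right A hlt.ne, hsymm p.succ j.succ]
    have hT2 : (∑ q ∈ (I.erase j).filter (fun q => j < q), (tAfin A j q).mulVec (iotaB j v))
        = ∑ q ∈ (I.erase j).filter (fun q => j < q),
            (iotaB j ((A j.succ q.succ + A 0 q.succ).mulVec v)
              - iotaB q ((A 0 j.succ).mulVec v)) := by
      refine Finset.sum_congr rfl fun q hq => ?_
      have hlt : j < q := (Finset.mem_filter.mp hq).2
      rw [tAfin_mulVec_left A hlt.ne]
    rw [hT1, hT2,
      sum_filter_lt_add_gt hjE (fun q => iotaB j ((A j.succ q.succ + A 0 q.succ).mulVec v)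
        - iotaB q ((A 0 j.succ).mulVec v))]
    -- now rewrite the RHS
    have hz : (0 : Fin (m + 1)) ∉ I.image Fin.succ := by
      simp [Finset.mem_image, Fin.succ_ne_zero]
    have hjs : j.succ ∉ (I.erase j).image Fin.succ := by
      intro h
      obtain ⟨a, ha, h2⟩ := Finset.mem_image.mp h
      exact hjE (Fin.succ_injective m h2 ▸ ha)
    have hIimg : I.image Fin.succ = insert j.succ ((I.erase j).image Fin.succ) := by
      conv_lhs => rw [← Finset.insert_erase hj]
      rw [Finset.image_insert]
    have hM : resSum A (insert 0 (I.image Fin.succ))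
        = resSum A ((I.erase j).image Fin.succ)
          + (∑ q ∈ I.erase j, A j.succ q.succ)
          + (A 0 j.succ + ∑ q ∈ I.erase j, A 0 q.succ) := by
      rw [resSum_insert A hsymm hz, hIimg, resSum_insert A hsymm hjs,
        Finset.sum_insert hjs,
        Finset.sum_image (fun x _ y _ h => Fin.succ_injective m h),
        Finset.sum_image (fun x _ y _ h => Fin.succ_injective m h)]
    rw [hM]
    have hiS : iotaS I ((A 0 j.succ).mulVec v)
        = iotaB j ((A 0 j.succ).mulVec v)
          + ∑ q ∈ I.erase j, iotaB q ((A 0 j.succ).mulVec v) := by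
      rw [iotaS_eq_sum, ← Finset.add_sum_erase I _ hj]
    rw [hiS, iotaB_mulVec_add, iotaB_mulVec_add, iotaB_mulVec_add,
      iotaB_mulVec_sum, iotaB_mulVec_sum]
    rw [show (∑ q ∈ I.erase j,
        (iotaB j ((A j.succ q.succ + A 0 q.succ).mulVec v)
          - iotaB q ((A 0 j.succ).mulVec v)))
      = ∑ q ∈ I.erase j,
          ((iotaB j ((A j.succ q.succ).mulVec v) + iotaB j ((A 0 q.succ).mulVec v))
            - iotaB q ((A 0 j.succ).mulVec v))
      from Finset.sum_congr rfl fun q _ => by rw [iotaB_mulVec_add]]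
    rw [Finset.sum_sub_distrib, Finset.sum_add_distrib]
    abel
  · -- (c)
    intro k hk
    exact tRes_mulVec_not_mem A I hk v
end
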